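/- arXiv:1605.03213 — 9 statements merged into one kernel-verified Lean document; each statement's English description precedes it below -/
import Mathlib

section
/- Let p ≥ 1 be an integer, λ ∈ {−1, 1}, and Δt > 0. Let u and v be Schwartz functions on ℝ², set m = (u + v)/2, and define W(x,y) = ∫_{−∞}^{x} ∂²_y m(s,y) ds. If for all (x,y) ∈ ℝ² the Sanz–Serna time-discretization of the generalized KP equation holds, i.e. (v(x,y) − u(x,y))/Δt + ∂³_x m(x,y) + (1/(p+1)) ∂_x (m^{p+1})(x,y) + λ W(x,y) = 0, then the mean is conserved: ∫_{ℝ²} v(x,y) dx dy = ∫_{ℝ²} u(x,y) dx dy. -/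
/-!
Integrate the scheme over `ℝ²`. The dispersive term `∂ₓ³m` and the flux `∂ₓ(m^{p+1})` are
`x`-derivatives of Schwartz functions, so their integrals vanish. The nonlocal term `λW` is not
integrable a priori, but the scheme makes it equal to minus a Schwartz function; then Fubini
applies, and for each `x`, `∫ W(x,y) dy = ∫_{s ≤ x} ∫ ∂²_y m(s,y) dy ds = 0`. What remains is
`(∫ v - ∫ u) / Δt = 0`.
-/

open MeasureTheory LineDeriv
open scoped SchwartzMap

section LineDeriv

variable {D V : Type*} [NormedAddCommGroup D] [NormedSpace ℝ D] [FiniteDimensional ℝ D]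
  [MeasurableSpace D] [BorelSpace D] {μ : Measure D} [μ.IsAddHaarMeasure]
  [NormedAddCommGroup V] [NormedSpace ℝ V]

theorem integral_eq_zero_of_hasLineDerivAt_of_integrable {f f' : D → V} {v : D}
    (hf : ∀ x, HasLineDerivAt ℝ f (f' x) x v) (hfi : Integrable f μ) (hf'i : Integrable f' μ) :
    ∫ x, f' x ∂μ = 0 := by
  -- integration by parts against the constant function `1`
  have h := integral_bilinear_hasLineDerivAt_right_eq_neg_left_of_integrable (μ := μ)
    (f := fun _ => (1 : ℝ)) (f' := 0) (B := ContinuousLinearMap.lsmul ℝ ℝ) (v := v)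
    (by simp) (by simpa using hf'i) (by simpa using hfi)
    (fun x _ => by simpa using (hasFDerivAt_const (1 : ℝ) x).hasLineDerivAt v) (fun x _ => hf x)
  simpa using h

theorem SchwartzMap.integral_lineDerivOp_eq_zero (f : 𝓢(D, V)) (v : D) :
    ∫ x, ∂_{v} f x ∂μ = 0 :=
  integral_eq_zero_of_hasLineDerivAt_of_integrable
    (fun x => (f.hasFDerivAt x).hasLineDerivAt v) f.integrable (lineDerivOp v f).integrable

end LineDeriv

theorem integral_integral_eq_zero_of_hasDerivAt_snd {α E : Type*} [MeasurableSpace α]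
    {μ : Measure α} [SFinite μ] [NormedAddCommGroup E] [NormedSpace ℝ E] {f f' : α × ℝ → E}
    (hf : ∀ x y, HasDerivAt (fun y' => f (x, y')) (f' (x, y)) y)
    (hfi : Integrable f (μ.prod volume)) (hf'i : Integrable f' (μ.prod volume)) :
    ∫ y, ∫ x, f' (x, y) ∂μ = 0 := by
  have hslice : ∀ᵐ x ∂μ, ∫ y, f' (x, y) = 0 := by
    filter_upwards [hfi.prod_right_ae, hf'i.prod_right_ae] with x hx hx'
    exact integral_eq_zero_of_hasDerivAt_of_integrable (hf x) hx' hx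
  rw [← integral_integral_swap (f := fun x y => f' (x, y)) hf'i]
  exact integral_eq_zero_of_ae hslice

namespace SchwartzMap

section Slices

variable {E V : Type*} [NormedAddCommGroup E] [NormedSpace ℝ E]
  [NormedAddCommGroup V] [NormedSpace ℝ V]

theorem hasDerivAt_fst (f : 𝓢(ℝ × E, V)) (x : ℝ) (y : E) :
    HasDerivAt (fun x' => f (x', y)) (∂_{((1 : ℝ), (0 : E))} f (x, y)) x :=
  (f.hasFDerivAt (x, y)).comp_hasDerivAt x ((hasDerivAt_id x).prodMk (hasDerivAt_const x y))

theorem hasDerivAt_snd (f : 𝓢(E × ℝ, V)) (x : E) (y : ℝ) :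
    HasDerivAt (fun y' => f (x, y')) (∂_{((0 : E), (1 : ℝ))} f (x, y)) y :=
  (f.hasFDerivAt (x, y)).comp_hasDerivAt y ((hasDerivAt_const y x).prodMk (hasDerivAt_id y))

theorem iteratedDeriv_fst (f : 𝓢(ℝ × E, V)) (n : ℕ) (y : E) :
    iteratedDeriv n (fun x => f (x, y))
      = fun x => (lineDerivOp ((1 : ℝ), (0 : E)))^[n] f (x, y) := by
  induction n with
  | zero => simp
  | succ n ih =>
    ext x
    rw [iteratedDeriv_succ, ih, Function.iterate_succ_apply', (hasDerivAt_fst _ x y).deriv]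

theorem iteratedDeriv_snd (f : 𝓢(E × ℝ, V)) (n : ℕ) (x : E) :
    iteratedDeriv n (fun y => f (x, y))
      = fun y => (lineDerivOp ((0 : E), (1 : ℝ)))^[n] f (x, y) := by
  induction n with
  | zero => simp
  | succ n ih =>
    ext y
    rw [iteratedDeriv_succ, ih, Function.iterate_succ_apply', (hasDerivAt_snd _ x y).deriv]

end Slices

theorem integral_setIntegral_lineDerivOp_snd_eq_zero {V : Type*}
    [NormedAddCommGroup V] [NormedSpace ℝ V] (f : 𝓢(ℝ × ℝ, V)) (s : Set ℝ) :
    ∫ y, ∫ x in s, ∂_{((0 : ℝ), (1 : ℝ))} f (x, y) = 0 := by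
  have hle : (volume.restrict s).prod volume ≤ (volume : Measure (ℝ × ℝ)) := by
    rw [Measure.volume_eq_prod]
    exact Measure.prod_mono Measure.restrict_le_self le_rfl
  exact integral_integral_eq_zero_of_hasDerivAt_snd (fun x y => f.hasDerivAt_snd x y)
    (f.integrable.mono_measure hle)
    ((lineDerivOp ((0 : ℝ), (1 : ℝ)) f).integrable.mono_measure hle)

section Pow

variable {D R : Type*} [NormedAddCommGroup D] [NormedSpace ℝ D] [NormedRing R] [NormedAlgebra ℝ R]

noncomputable def powSucc (f : 𝓢(D, R)) : ℕ → 𝓢(D, R)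
  | 0 => f
  | n + 1 => pairing (ContinuousLinearMap.mul ℝ R) (powSucc f n) f

@[simp]
theorem powSucc_apply (f : 𝓢(D, R)) (n : ℕ) (x : D) : f.powSucc n x = f x ^ (n + 1) := by
  induction n with
  | zero => simp [powSucc]
  | succ n ih => simp [powSucc, ih, pow_succ]

end Pow

end SchwartzMap

theorem sanz_serna_conserves_mean_general
    (p : ℕ) (lam : ℝ)
    (Δt : ℝ) (hΔt : 0 < Δt)
    (u v : SchwartzMap (ℝ × ℝ) ℝ)
    (m : ℝ → ℝ → ℝ) (hm : ∀ x y : ℝ, m x y = (u (x, y) + v (x, y)) / 2)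
    (W : ℝ → ℝ → ℝ)
    (hW : ∀ x y : ℝ,
      W x y = ∫ s in Set.Iic x, iteratedDeriv 2 (fun y' => m s y') y)
    (hscheme : ∀ x y : ℝ,
      (v (x, y) - u (x, y)) / Δt
        + iteratedDeriv 3 (fun x' => m x' y) x
        + (1 / ((p : ℝ) + 1)) * deriv (fun x' => (m x' y) ^ (p + 1)) x
        + lam * W x y = 0) :
    (∫ q : ℝ × ℝ, v q) = ∫ q : ℝ × ℝ, u q := by
  set M : 𝓢(ℝ × ℝ, ℝ) := (2 : ℝ)⁻¹ • (u + v)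
  obtain rfl : m = fun x y => M (x, y) := by
    ext x y
    simp only [hm, M, smul_add, add_apply, smul_apply, smul_eq_mul]
    ring
  beta_reduce at hW hscheme
  set Dx := lineDerivOp ((1 : ℝ), (0 : ℝ)) (E := 𝓢(ℝ × ℝ, ℝ))
  set T : 𝓢(ℝ × ℝ, ℝ) :=
    Δt⁻¹ • (v - u) + Dx^[3] M + ((p : ℝ) + 1)⁻¹ • Dx (M.powSucc p)
  have hlamW : ∀ q : ℝ × ℝ, lam * W q.1 q.2 = -T q := by
    rintro ⟨x, y⟩
    have hpow : (fun x' => M (x', y) ^ (p + 1)) = fun x' => M.powSucc p (x', y) := by simp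
    have h := hscheme x y
    rw [SchwartzMap.iteratedDeriv_fst, hpow, (SchwartzMap.hasDerivAt_fst _ x y).deriv] at h
    simp only [T, Dx, add_apply, smul_apply, sub_apply, smul_eq_mul]
    linear_combination h
  have hW_slice : ∀ x, ∫ y, W x y = 0 := by
    intro x
    simp_rw [hW, SchwartzMap.iteratedDeriv_snd]
    exact (lineDerivOp ((0 : ℝ), (1 : ℝ)) M).integral_setIntegral_lineDerivOp_snd_eq_zero _
  have hT : ∫ q, T q = Δt⁻¹ * ((∫ q, v q) - ∫ q, u q) := by
    rw [← SchwartzMap.integralCLM_apply ℝ]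
    simp only [T, Dx, map_add, map_smul, map_sub, SchwartzMap.integralCLM_apply,
      Function.iterate_succ_apply', SchwartzMap.integral_lineDerivOp_eq_zero, smul_eq_mul]
    ring
  have hT_zero : ∫ q, T q = 0 := by
    have hint : Integrable (fun q : ℝ × ℝ => lam * W q.1 q.2) (volume.prod volume) := by
      rw [← Measure.volume_eq_prod, show (fun q : ℝ × ℝ => lam * W q.1 q.2) = -⇑T from
        funext hlamW]
      exact T.integrable.neg
    calc ∫ q, T q = -∫ q : ℝ × ℝ, lam * W q.1 q.2 := by simp [hlamW, integral_neg]
      _ = 0 := by simp [Measure.volume_eq_prod, integral_prod _ hint, integral_const_mul, hW_slice]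
  rw [hT] at hT_zero
  simpa [hΔt.ne', sub_eq_zero] using hT_zero

/-- The Sanz–Serna time discretization of the generalized KP equation
conserves the mean: if `u` (playing the role of `uₙ`) and `v` (playing the
role of `uₙ₊₁`) are Schwartz functions on `ℝ²` satisfying the scheme, then
`∫ v = ∫ u`. -/
theorem sanz_serna_conserves_mean
    (p : ℕ) (hp : 1 ≤ p) (lam : ℝ) (hlam : lam = -1 ∨ lam = 1)
    (Δt : ℝ) (hΔt : 0 < Δt)
    (u v : SchwartzMap (ℝ × ℝ) ℝ)
    (m : ℝ → ℝ → ℝ) (hm : ∀ x y : ℝ, m x y = (u (x, y) + v (x, y)) / 2)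
    (W : ℝ → ℝ → ℝ)
    (hW : ∀ x y : ℝ,
      W x y = ∫ s in Set.Iic x, iteratedDeriv 2 (fun y' => m s y') y)
    (hscheme : ∀ x y : ℝ,
      (v (x, y) - u (x, y)) / Δt
        + iteratedDeriv 3 (fun x' => m x' y) x
        + (1 / ((p : ℝ) + 1)) * deriv (fun x' => (m x' y) ^ (p + 1)) x
        + lam * W x y = 0) :
    (∫ q : ℝ × ℝ, v q) = ∫ q : ℝ × ℝ, u q :=
  sanz_serna_conserves_mean_general p lam Δt hΔt u v m hm W hW hscheme
end

section
/- Let p ≥ 1 be an integer, λ ∈ {−1, 1}, and Δt > 0. Let u and v be Schwartz functions on ℝ², set m = (u + v)/2, and define W(x,y) = ∫_{−∞}^{x} ∂²_y m(s,y) ds. Assume the mass-zero constraint ∫_ℝ m(x,y) dx = 0 for every y ∈ ℝ. If for all (x,y) ∈ ℝ² the scheme equation (v(x,y) − u(x,y))/Δt + ∂³_x m(x,y) + (1/(p+1)) ∂_x (m^{p+1})(x,y) + λ W(x,y) = 0 holds, then the L²-norm is conserved: ∫_{ℝ²} v(x,y)² dx dy = ∫_{ℝ²} u(x,y)² dx dy.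 -/
/-!
Write `m = (u + v)/2`. Then `v² - u² = 2m (v - u)`, and the scheme says `v - u = -Δt N(m)` for the
spatial KP operator `N(m) = m_xxx + m^p m_x + λ ∂ₓ⁻¹ m_yy`, so `∫ v² - ∫ u² = -2Δt ∫ m N(m)`.
Each term of `∫ m N(m)` vanishes. Integrating by parts in `x`, `∫ m m_xxx = -∫ m_x m_xx = 0` and
`∫ m^(p+1) m_x = -(p+1) ∫ m^(p+1) m_x`. For the nonlocal term, integrating by parts in `y` gives
`∫ m ∂ₓ⁻¹ m_yy = -∫ m_y ∂ₓ⁻¹ m_y`, and on each line `y = const`, `∫ b ∂ₓ⁻¹ b dx = (∫ b dx)² / 2`.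
For `b = m_y` this is `0`, since differentiating the mass constraint in `y` gives `∫ m_y dx = 0`.
-/

open MeasureTheory Filter Set Topology
open scoped LineDeriv

local notation "∂ₓ" => LineDeriv.lineDerivOp ((1 : ℝ), (0 : ℝ))
local notation "∂ᵧ" => LineDeriv.lineDerivOp ((0 : ℝ), (1 : ℝ))

theorem hasDerivAt_setIntegral_Iic {f : ℝ → ℝ} (hf : Continuous f) (hfi : Integrable f)
    (x : ℝ) : HasDerivAt (fun x => ∫ s in Iic x, f s) (f x) x := by
  have h : (fun x => ∫ s in Iic x, f s) = fun x => (∫ s in Iic 0, f s) + ∫ s in (0)..x, f s := by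
    funext x
    rw [← intervalIntegral.integral_Iic_sub_Iic hfi.integrableOn hfi.integrableOn]
    ring
  rw [h]
  exact (hf.integral_hasStrictDerivAt 0 x).hasDerivAt.const_add _

theorem integral_mul_setIntegral_Iic_self {f : ℝ → ℝ} (hf : Continuous f) (hfi : Integrable f) :
    ∫ x, f x * ∫ s in Iic x, f s = (∫ x, f x) ^ 2 / 2 := by
  set F := fun x => ∫ s in Iic x, f s
  have hF (x : ℝ) : HasDerivAt F (f x) x := hasDerivAt_setIntegral_Iic hf hfi x
  have hbot : Tendsto F atBot (𝓝 0) := tendsto_integral_Iic_zero tendsto_id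
  have htop : Tendsto F atTop (𝓝 (∫ x, f x)) :=
    (aecover_Iic tendsto_id).integral_tendsto_of_countably_generated hfi
  have hbdd (x : ℝ) : ‖F x‖ ≤ ∫ s, ‖f s‖ :=
    (norm_integral_le_integral_norm _).trans
      (setIntegral_le_integral hfi.norm (ae_of_all _ fun _ => norm_nonneg _))
  have hint : Integrable fun x => f x * F x :=
    hfi.mul_bdd (continuous_iff_continuousAt.2 fun x => (hF x).continuousAt).aestronglyMeasurable
      (ae_of_all _ hbdd)
  have hG (x : ℝ) : HasDerivAt (fun x => F x * F x / 2) (f x * F x) x :=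
    (((hF x).mul (hF x)).div_const 2).congr_deriv (by ring)
  rw [integral_of_hasDerivAt_of_tendsto hG hint ((hbot.mul hbot).div_const 2)
    ((htop.mul htop).div_const 2)]
  ring

namespace SchwartzMap

section Calculus

variable {E F : Type*} [NormedAddCommGroup E] [NormedSpace ℝ E] [NormedAddCommGroup F]
  [NormedSpace ℝ F]

theorem hasDerivAt_comp (f : 𝓢(E, F)) {γ : ℝ → E} {v : E} {t : ℝ} (hγ : HasDerivAt γ v t) :
    HasDerivAt (fun s => f (γ s)) (∂_{v} f (γ t)) t := by
  rw [lineDerivOp_apply_eq_fderiv]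
  exact f.differentiableAt.hasFDerivAt.comp_hasDerivAt t hγ

theorem iteratedDeriv_comp (f : 𝓢(E, F)) {γ : ℝ → E} {v : E} (hγ : ∀ t, HasDerivAt γ v t)
    (n : ℕ) : iteratedDeriv n (fun t => f (γ t)) = fun t => (∂_{v})^[n] f (γ t) := by
  induction n generalizing f with
  | zero => simp
  | succ n ih =>
    rw [iteratedDeriv_succ', funext fun t => (f.hasDerivAt_comp (hγ t)).deriv, ih,
      Function.iterate_succ_apply]

theorem hasLineDerivAt (f : 𝓢(E, F)) (x v : E) : HasLineDerivAt ℝ f (∂_{v} f x) x v := by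
  rw [lineDerivOp_apply_eq_fderiv]
  exact (f.hasFDerivAt x).hasLineDerivAt v

end Calculus

section IntegrationByParts

variable {D : Type*} [NormedAddCommGroup D] [NormedSpace ℝ D] [FiniteDimensional ℝ D]
  [MeasurableSpace D] [BorelSpace D] {μ : Measure D} [μ.IsAddHaarMeasure]

theorem integrable_apply_pow_mul (f g : 𝓢(D, ℝ)) (n : ℕ) :
    Integrable (fun x => f x ^ n * g x) μ :=
  g.integrable.bdd_mul (f.continuous.pow n).aestronglyMeasurable
    (ae_of_all _ fun x => by
      rw [norm_pow]
      exact pow_le_pow_left₀ (norm_nonneg _) (f.norm_le_seminorm ℝ x) n)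

theorem integral_mul_lineDerivOp_self (f : 𝓢(D, ℝ)) (v : D) :
    ∫ x, f x * ∂_{v} f x ∂μ = 0 := by
  have h := integral_mul_lineDerivOp_right_eq_neg_left (μ := μ) f f v
  simp_rw [mul_comm (∂_{v} f _)] at h
  linarith

theorem integral_mul_lineDerivOp_three (f : 𝓢(D, ℝ)) (v : D) :
    ∫ x, f x * ∂_{v} (∂_{v} (∂_{v} f)) x ∂μ = 0 := by
  rw [integral_mul_lineDerivOp_right_eq_neg_left, integral_mul_lineDerivOp_self, neg_zero]

theorem integral_pow_mul_lineDerivOp (f : 𝓢(D, ℝ)) (n : ℕ) (v : D) :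
    ∫ x, f x ^ n * ∂_{v} f x ∂μ = 0 := by
  have hint (k : ℕ) (g : 𝓢(D, ℝ)) := integrable_apply_pow_mul (μ := μ) f g k
  have hpow (x : D) :
      HasLineDerivAt ℝ (fun x => f x ^ n) (n * f x ^ (n - 1) * ∂_{v} f x) x v := by
    have h : HasDerivAt (fun t : ℝ => f (x + t • v)) (∂_{v} f x) 0 := f.hasLineDerivAt x v
    simpa [HasLineDerivAt] using h.fun_pow n
  have hfactor (x : D) : n * f x ^ (n - 1) * ∂_{v} f x * f x = n * (f x ^ n * ∂_{v} f x) := by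
    cases n with
    | zero => simp
    | succ k =>
      rw [Nat.add_sub_cancel, pow_succ]
      ring
  have h := integral_bilinear_hasLineDerivAt_right_eq_neg_left_of_integrable
    (B := ContinuousLinearMap.mul ℝ ℝ) (μ := μ) (v := v)
    (f' := fun x => n * f x ^ (n - 1) * ∂_{v} f x) (g' := fun x => ∂_{v} f x)
    (by simpa only [ContinuousLinearMap.mul_apply', hfactor] using (hint n (∂_{v} f)).const_mul n)
    (hint n _) (hint n f) (fun x _ => hpow x) (fun x _ => f.hasLineDerivAt x v)
  simp only [ContinuousLinearMap.mul_apply', hfactor, integral_const_mul] at h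
  have h' : ((n : ℝ) + 1) * ∫ x, f x ^ n * ∂_{v} f x ∂μ = 0 := by linarith
  exact (mul_eq_zero.1 h').resolve_left (by positivity)

end IntegrationByParts

section Plane

variable {F : Type*} [NormedAddCommGroup F] [NormedSpace ℝ F]

theorem hasDerivAt_comp_fst (f : 𝓢(ℝ × ℝ, F)) (x y : ℝ) :
    HasDerivAt (fun x => f (x, y)) (∂ₓ f (x, y)) x :=
  f.hasDerivAt_comp ((hasDerivAt_id x).prodMk (hasDerivAt_const x y))

theorem iteratedDeriv_comp_fst (f : 𝓢(ℝ × ℝ, F)) (y : ℝ) (n : ℕ) :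
    iteratedDeriv n (fun x => f (x, y)) = fun x => (∂ₓ)^[n] f (x, y) :=
  f.iteratedDeriv_comp (fun x => (hasDerivAt_id x).prodMk (hasDerivAt_const x y)) n

theorem hasDerivAt_comp_snd (f : 𝓢(ℝ × ℝ, F)) (x y : ℝ) :
    HasDerivAt (fun y => f (x, y)) (∂ᵧ f (x, y)) y :=
  f.hasDerivAt_comp ((hasDerivAt_const y x).prodMk (hasDerivAt_id y))

theorem iteratedDeriv_comp_snd (f : 𝓢(ℝ × ℝ, F)) (x : ℝ) (n : ℕ) :
    iteratedDeriv n (fun y => f (x, y)) = fun y => (∂ᵧ)^[n] f (x, y) :=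
  f.iteratedDeriv_comp (fun y => (hasDerivAt_const y x).prodMk (hasDerivAt_id y)) n

theorem exists_bound_fst (f : 𝓢(ℝ × ℝ, F)) : ∃ C, ∀ x y, ‖f (x, y)‖ ≤ C * (1 + x ^ 2)⁻¹ := by
  refine ⟨SchwartzMap.seminorm ℝ 0 0 f + SchwartzMap.seminorm ℝ 2 0 f, fun x y => ?_⟩
  rw [← div_eq_mul_inv, le_div_iff₀ (by positivity)]
  have hx : x ^ 2 ≤ ‖(x, y)‖ ^ 2 := by
    simpa using pow_le_pow_left₀ (abs_nonneg x) (norm_fst_le ((x, y) : ℝ × ℝ)) 2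
  have h0 := f.norm_le_seminorm ℝ (x, y)
  have h2 := f.norm_pow_mul_le_seminorm ℝ 2 (x, y)
  nlinarith [norm_nonneg (f (x, y))]

theorem integrable_comp_prodMk_right (f : 𝓢(ℝ × ℝ, F)) (y : ℝ) :
    Integrable (fun x => f (x, y)) := by
  obtain ⟨C, hC⟩ := f.exists_bound_fst
  exact (integrable_inv_one_add_sq.const_mul C).mono'
    (f.continuous.comp (continuous_id.prodMk continuous_const)).aestronglyMeasurable
    (ae_of_all _ fun x => hC x y)

theorem hasDerivAt_setIntegral_fst (f : 𝓢(ℝ × ℝ, F)) (S : Set ℝ) (y : ℝ) :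
    HasDerivAt (fun y => ∫ x in S, f (x, y)) (∫ x in S, ∂ᵧ f (x, y)) y := by
  obtain ⟨C, hC⟩ := (∂ᵧ f).exists_bound_fst
  exact (hasDerivAt_integral_of_dominated_loc_of_deriv_le (bound := fun x => C * (1 + x ^ 2)⁻¹)
    univ_mem
    (Eventually.of_forall fun y => (f.integrable_comp_prodMk_right y).aestronglyMeasurable.restrict)
    (f.integrable_comp_prodMk_right y).integrableOn
    ((∂ᵧ f).integrable_comp_prodMk_right y).aestronglyMeasurable.restrict
    (ae_of_all _ fun x y _ => hC x y) (integrable_inv_one_add_sq.const_mul C).integrableOn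
    (ae_of_all _ fun x y _ => f.hasDerivAt_comp_snd x y)).2

/-- The paper's `∂ₓ⁻¹ f`, realised as `∫_{-∞}^x f(s, y) ds`. -/
noncomputable def antiderivFst (f : 𝓢(ℝ × ℝ, F)) (q : ℝ × ℝ) : F :=
  ∫ s in Iic q.1, f (s, q.2)

theorem exists_bound_antiderivFst (f : 𝓢(ℝ × ℝ, F)) : ∃ C, ∀ q, ‖antiderivFst f q‖ ≤ C := by
  obtain ⟨C, hC⟩ := f.exists_bound_fst
  have hint : Integrable fun s : ℝ => C * (1 + s ^ 2)⁻¹ := integrable_inv_one_add_sq.const_mul C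
  refine ⟨∫ s, C * (1 + s ^ 2)⁻¹, fun q => ?_⟩
  calc ‖antiderivFst f q‖ ≤ ∫ s in Iic q.1, C * (1 + s ^ 2)⁻¹ :=
        norm_integral_le_of_norm_le hint.integrableOn (ae_of_all _ fun s => hC s q.2)
    _ ≤ ∫ s, C * (1 + s ^ 2)⁻¹ :=
        setIntegral_le_integral hint (ae_of_all _ fun s => (norm_nonneg _).trans (hC s q.2))

theorem aestronglyMeasurable_antiderivFst (f : 𝓢(ℝ × ℝ, F)) :
    AEStronglyMeasurable (antiderivFst f) := by
  have hE : MeasurableSet {p : (ℝ × ℝ) × ℝ | p.2 ≤ p.1.1} :=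
    measurableSet_le measurable_snd measurable_fst.fst
  have hf : Continuous fun p : (ℝ × ℝ) × ℝ => f (p.2, p.1.2) :=
    f.continuous.comp (continuous_snd.prodMk continuous_fst.snd)
  have heq : antiderivFst f = fun q => ∫ s, {p : (ℝ × ℝ) × ℝ | p.2 ≤ p.1.1}.indicator
      (fun p => f (p.2, p.1.2)) (q, s) := by
    funext q
    rw [antiderivFst, ← integral_indicator measurableSet_Iic]
    rfl
  rw [heq]
  exact (hf.stronglyMeasurable.indicator hE).integral_prod_right'.aestronglyMeasurable

theorem hasLineDerivAt_antiderivFst (f : 𝓢(ℝ × ℝ, F)) (q : ℝ × ℝ) :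
    HasLineDerivAt ℝ (antiderivFst f) (antiderivFst (∂ᵧ f) q) q ((0 : ℝ), (1 : ℝ)) := by
  have h := (f.hasDerivAt_setIntegral_fst (Iic q.1) (q.2 + 0)).comp_const_add q.2 0
  simpa [HasLineDerivAt, antiderivFst] using h

end Plane

theorem integrable_mul_antiderivFst (g f : 𝓢(ℝ × ℝ, ℝ)) :
    Integrable fun q => g q * antiderivFst f q := by
  obtain ⟨C, hC⟩ := f.exists_bound_antiderivFst
  exact g.integrable.mul_bdd f.aestronglyMeasurable_antiderivFst (ae_of_all _ hC)

theorem integral_mul_antiderivFst_lineDerivOp_snd (g f : 𝓢(ℝ × ℝ, ℝ)) :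
    ∫ q, g q * antiderivFst (∂ᵧ f) q = -∫ q, ∂ᵧ g q * antiderivFst f q :=
  integral_bilinear_hasLineDerivAt_right_eq_neg_left_of_integrable
    (B := ContinuousLinearMap.mul ℝ ℝ) (integrable_mul_antiderivFst _ _)
    (integrable_mul_antiderivFst _ _) (integrable_mul_antiderivFst _ _)
    (fun q _ => g.hasLineDerivAt q _) (fun q _ => f.hasLineDerivAt_antiderivFst q)

theorem integral_mul_antiderivFst_self (f : 𝓢(ℝ × ℝ, ℝ)) :
    ∫ q, f q * antiderivFst f q = ∫ y, (∫ x, f (x, y)) ^ 2 / 2 := by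
  rw [Measure.volume_eq_prod, integral_prod_symm _ (integrable_mul_antiderivFst f f)]
  exact integral_congr_ae (ae_of_all _ fun y => integral_mul_setIntegral_Iic_self
    (f.continuous.comp (continuous_id.prodMk continuous_const))
    (f.integrable_comp_prodMk_right y))

theorem integral_lineDerivOp_snd_eq_zero (f : 𝓢(ℝ × ℝ, ℝ)) (h : ∀ y, ∫ x, f (x, y) = 0)
    (y : ℝ) : ∫ x, ∂ᵧ f (x, y) = 0 := by
  have hd := f.hasDerivAt_setIntegral_fst univ y
  simp only [Measure.restrict_univ, h] at hd
  exact hd.unique (hasDerivAt_const y 0)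

theorem integral_mul_antiderivFst_lineDerivOp_snd_snd (f : 𝓢(ℝ × ℝ, ℝ))
    (h : ∀ y, ∫ x, f (x, y) = 0) : ∫ q, f q * antiderivFst (∂ᵧ (∂ᵧ f)) q = 0 := by
  rw [integral_mul_antiderivFst_lineDerivOp_snd, integral_mul_antiderivFst_self]
  simp [integral_lineDerivOp_snd_eq_zero f h]

/-- The spatial part `∂ₓ³w + (p+1)⁻¹ ∂ₓ(w^(p+1)) + λ ∂ₓ⁻¹ ∂ᵧ²w` of the generalized KP equation. -/
noncomputable def kpOperator (p : ℕ) (lam : ℝ) (w : 𝓢(ℝ × ℝ, ℝ)) (q : ℝ × ℝ) : ℝ :=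
  ∂ₓ (∂ₓ (∂ₓ w)) q + w q ^ p * ∂ₓ w q + lam * antiderivFst (∂ᵧ (∂ᵧ w)) q

theorem integral_mul_kpOperator_eq_zero (p : ℕ) (lam : ℝ) (w : 𝓢(ℝ × ℝ, ℝ))
    (h : ∀ y, ∫ x, w (x, y) = 0) : ∫ q, w q * kpOperator p lam w q = 0 := by
  have hA : Integrable fun q => w q * ∂ₓ (∂ₓ (∂ₓ w)) q := by
    simpa using integrable_apply_pow_mul (μ := volume) w (∂ₓ (∂ₓ (∂ₓ w))) 1
  have hB := integrable_apply_pow_mul (μ := volume) w (∂ₓ w) (p + 1)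
  have hC := integrable_mul_antiderivFst w (∂ᵧ (∂ᵧ w))
  have hsplit (q : ℝ × ℝ) : w q * kpOperator p lam w q = w q * ∂ₓ (∂ₓ (∂ₓ w)) q
      + w q ^ (p + 1) * ∂ₓ w q + lam * (w q * antiderivFst (∂ᵧ (∂ᵧ w)) q) := by
    rw [kpOperator]
    ring
  simp_rw [hsplit]
  rw [integral_add (hA.fun_add hB) (hC.const_mul lam), integral_add hA hB, integral_const_mul,
    integral_mul_lineDerivOp_three, integral_pow_mul_lineDerivOp,
    integral_mul_antiderivFst_lineDerivOp_snd_snd w h]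
  ring

end SchwartzMap

open SchwartzMap

theorem sanz_serna_conserves_L2_norm_general
    (p : ℕ) (lam : ℝ)
    (Δt : ℝ) (hΔt : 0 < Δt)
    (u v : SchwartzMap (ℝ × ℝ) ℝ)
    (m : ℝ → ℝ → ℝ) (hm : ∀ x y : ℝ, m x y = (u (x, y) + v (x, y)) / 2)
    (W : ℝ → ℝ → ℝ)
    (hW : ∀ x y : ℝ,
      W x y = ∫ s in Set.Iic x, iteratedDeriv 2 (fun y' => m s y') y)
    (hmass : ∀ y : ℝ, (∫ x : ℝ, m x y) = 0)
    (hscheme : ∀ x y : ℝ,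
      (v (x, y) - u (x, y)) / Δt
        + iteratedDeriv 3 (fun x' => m x' y) x
        + (1 / ((p : ℝ) + 1)) * deriv (fun x' => (m x' y) ^ (p + 1)) x
        + lam * W x y = 0) :
    (∫ q : ℝ × ℝ, (v q) ^ 2) = ∫ q : ℝ × ℝ, (u q) ^ 2 := by
  set w : 𝓢(ℝ × ℝ, ℝ) := (2⁻¹ : ℝ) • (u + v)
  have hw (q : ℝ × ℝ) : u q + v q = 2 * w q := by
    simp [w]
    ring
  obtain rfl : m = fun x y => w (x, y) := by
    funext x y
    rw [hm, hw]
    ring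
  have hstep (q : ℝ × ℝ) : v q - u q = -Δt * kpOperator p lam w q := by
    obtain ⟨x, y⟩ := q
    have h := hscheme x y
    simp only [w.iteratedDeriv_comp_fst, w.iteratedDeriv_comp_snd, hW,
      ((w.hasDerivAt_comp_fst x y).fun_pow (p + 1)).deriv, Function.iterate_succ,
      Function.iterate_zero, Function.comp_apply, id_eq, Nat.add_sub_cancel,
      Nat.cast_add_one] at h
    simp only [kpOperator, antiderivFst]
    field_simp at h
    linarith
  have hv := (v.memLp 2).integrable_sq
  have hu := (u.memLp 2).integrable_sq
  rw [← sub_eq_zero, ← integral_sub hv hu]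
  calc ∫ q, v q ^ 2 - u q ^ 2 = ∫ q, -(2 * Δt) * (w q * kpOperator p lam w q) := by
        congr with q
        rw [sq_sub_sq, hstep, add_comm, hw]
        ring
    _ = 0 := by rw [integral_const_mul, integral_mul_kpOperator_eq_zero p lam w hmass, mul_zero]

/-- The Sanz–Serna time discretization of the generalized KP equation
conserves the `L²`-norm: if `u` (playing the role of `uₙ`) and `v` (playing
the role of `uₙ₊₁`) are Schwartz functions on `ℝ²` whose average
`m = (u + v)/2` satisfies the mass-zero constraint and the scheme equation,
then `∫ v² = ∫ u²`. -/
theorem sanz_serna_conserves_L2_norm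
    (p : ℕ) (hp : 1 ≤ p) (lam : ℝ) (hlam : lam = -1 ∨ lam = 1)
    (Δt : ℝ) (hΔt : 0 < Δt)
    (u v : SchwartzMap (ℝ × ℝ) ℝ)
    (m : ℝ → ℝ → ℝ) (hm : ∀ x y : ℝ, m x y = (u (x, y) + v (x, y)) / 2)
    (W : ℝ → ℝ → ℝ)
    (hW : ∀ x y : ℝ,
      W x y = ∫ s in Set.Iic x, iteratedDeriv 2 (fun y' => m s y') y)
    (hmass : ∀ y : ℝ, (∫ x : ℝ, m x y) = 0)
    (hscheme : ∀ x y : ℝ,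
      (v (x, y) - u (x, y)) / Δt
        + iteratedDeriv 3 (fun x' => m x' y) x
        + (1 / ((p : ℝ) + 1)) * deriv (fun x' => (m x' y) ^ (p + 1)) x
        + lam * W x y = 0) :
    (∫ q : ℝ × ℝ, (v q) ^ 2) = ∫ q : ℝ × ℝ, (u q) ^ 2 :=
  sanz_serna_conserves_L2_norm_general p lam Δt hΔt u v m hm W hW hmass hscheme
end

section
/- Let Δt ≠ 0, λ ∈ ℝ, and p ≥ 1 an integer. Let P₁, Q₁, P₃, Q₃ be real N_x×N_x matrices and P₂, Q₂ real N_y×N_y matrices such that P₁, P₂, P₃ are invertible, each column of P₁ sums to a constant C₁ ≠ 0, each column of P₂ sums to a constant C₂ ≠ 0, each column of P₃ sums to a constant C₃ ≠ 0, and each column of Q₁, Q₂, Q₃ sums to zero. Set D_x = P₁⁻¹Q₁, D_{yy} = P₂⁻¹Q₂, D_{xxx} = P₃⁻¹Q₃, and let B be an arbitrary real N_x×N_x matrix (the discrete antiderivative). Suppose the vectors U, V ∈ ℝ^{N_y·N_x} satisfy the fully discrete scheme (V − U)/Δt + (I_{N_y} ⊗ D_{xxx}) M + (1/(p+1)) (I_{N_y}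 ⊗ D_x) M^{[p+1]} + λ (D_{yy} ⊗ B) M = 0, where M = (U+V)/2, M^{[p+1]} denotes the entrywise (p+1)-st power of M, and ⊗ is the Kronecker product. Then the discrete mean is conserved: ∑_i V_i = ∑_i U_i. -/
open Matrix Kronecker

/-- If `P` is invertible with constant nonzero column sums `C` and `Q` has zero
column sums, then `P⁻¹ * Q` has zero column sums. -/
lemma colsum_inv_mul {N : ℕ} (P Q : Matrix (Fin N) (Fin N) ℝ) (hP : IsUnit P)
    (C : ℝ) (hC : C ≠ 0) (hPcol : ∀ j, ∑ i, P i j = C)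
    (hQcol : ∀ j, ∑ i, Q i j = 0) :
    ∀ j, ∑ i, (P⁻¹ * Q) i j = 0 := by
  have hdet : IsUnit P.det := (Matrix.isUnit_iff_isUnit_det P).mp hP
  have hPP : P * P⁻¹ = 1 := Matrix.mul_nonsing_inv P hdet
  set one : Fin N → ℝ := fun _ => 1 with hone
  have h1P : Matrix.vecMul one P = fun _ => C := by
    funext j
    simp [Matrix.vecMul, dotProduct, hone, hPcol j]
  have h1Q : Matrix.vecMul one Q = 0 := by
    funext j
    simp [Matrix.vecMul, dotProduct, hone, hQcol j]
  have hinv : Matrix.vecMul one P⁻¹ = fun _ => C⁻¹ := by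
    have h2 : Matrix.vecMul (Matrix.vecMul one P) P⁻¹ = one := by
      rw [Matrix.vecMul_vecMul, hPP, Matrix.vecMul_one]
    rw [h1P] at h2
    have h3 : Matrix.vecMul (fun _ : Fin N => C) P⁻¹
        = C • Matrix.vecMul one P⁻¹ := by
      funext j
      simp [Matrix.vecMul, dotProduct, hone, Finset.mul_sum]
    rw [h3] at h2
    funext j
    have h4 := congrFun h2 j
    simp only [Pi.smul_apply, smul_eq_mul] at h4
    exact eq_inv_of_mul_eq_one_right h4
  intro j
  have : Matrix.vecMul one (P⁻¹ * Q) j = 0 := by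
    rw [← Matrix.vecMul_vecMul, hinv]
    have : Matrix.vecMul (fun _ : Fin N => C⁻¹) Q
        = C⁻¹ • Matrix.vecMul one Q := by
      funext j
      simp [Matrix.vecMul, dotProduct, hone, Finset.mul_sum]
    rw [this, h1Q]
    simp
  simpa [Matrix.vecMul, dotProduct, hone] using this

/-- Summing `mulVec` of a Kronecker product against any vector vanishes when
the product of column sums of the factors vanishes. -/
lemma sum_mulVec_kron {m n : ℕ} (A : Matrix (Fin m) (Fin m) ℝ)
    (Bm : Matrix (Fin n) (Fin n) ℝ) (w : Fin m × Fin n → ℝ)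
    (h : ∀ j : Fin m × Fin n, (∑ i1, A i1 j.1) * (∑ i2, Bm i2 j.2) = 0) :
    ∑ i, (A ⊗ₖ Bm).mulVec w i = 0 := by
  simp only [Matrix.mulVec, dotProduct, Matrix.kroneckerMap_apply]
  rw [Finset.sum_comm]
  refine Finset.sum_eq_zero fun j _ => ?_
  have : ∑ i : Fin m × Fin n, A i.1 j.1 * Bm i.2 j.2 * w j
      = ((∑ i1, A i1 j.1) * (∑ i2, Bm i2 j.2)) * w j := by
    rw [Finset.sum_mul_sum]
    rw [Fintype.sum_prod_type]
    simp [Finset.sum_mul, mul_assoc]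
  rw [this, h j, zero_mul]

/-- The fully discrete compact finite difference scheme for the generalized
KP equation conserves the discrete mean: `∑ Vᵢ = ∑ Uᵢ`.  Here
`Dx = P₁⁻¹ Q₁`, `Dyy = P₂⁻¹ Q₂`, `Dxxx = P₃⁻¹ Q₃` are compact derivative
matrices (each `Pₖ` invertible with constant nonzero column sums, each `Qₖ`
with zero column sums), `B` is an arbitrary matrix playing the role of the
discrete antiderivative, and `M = (U + V)/2`. -/
theorem discrete_scheme_conserves_mean
    (Nx Ny : ℕ) (p : ℕ) (hp : 1 ≤ p) (Δt lam : ℝ) (hΔt : Δt ≠ 0)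
    (P1 Q1 P3 Q3 : Matrix (Fin Nx) (Fin Nx) ℝ)
    (P2 Q2 : Matrix (Fin Ny) (Fin Ny) ℝ)
    (hP1 : IsUnit P1) (hP2 : IsUnit P2) (hP3 : IsUnit P3)
    (C1 C2 C3 : ℝ) (hC1 : C1 ≠ 0) (hC2 : C2 ≠ 0) (hC3 : C3 ≠ 0)
    (hP1col : ∀ j, ∑ i, P1 i j = C1)
    (hP2col : ∀ j, ∑ i, P2 i j = C2)
    (hP3col : ∀ j, ∑ i, P3 i j = C3)
    (hQ1col : ∀ j, ∑ i, Q1 i j = 0)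
    (hQ2col : ∀ j, ∑ i, Q2 i j = 0)
    (hQ3col : ∀ j, ∑ i, Q3 i j = 0)
    (B : Matrix (Fin Nx) (Fin Nx) ℝ)
    (U V M : Fin Ny × Fin Nx → ℝ)
    (hM : ∀ i, M i = (U i + V i) / 2)
    (hscheme : ∀ i : Fin Ny × Fin Nx,
      (V i - U i) / Δt
        + ((1 : Matrix (Fin Ny) (Fin Ny) ℝ) ⊗ₖ (P3⁻¹ * Q3)).mulVec M i
        + (1 / ((p : ℝ) + 1)) *
            ((1 : Matrix (Fin Ny) (Fin Ny) ℝ) ⊗ₖ (P1⁻¹ * Q1)).mulVec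
              (fun j => M j ^ (p + 1)) i
        + lam * ((P2⁻¹ * Q2) ⊗ₖ B).mulVec M i = 0) :
    ∑ i, V i = ∑ i, U i := by
  have hD1 := colsum_inv_mul P1 Q1 hP1 C1 hC1 hP1col hQ1col
  have hD2 := colsum_inv_mul P2 Q2 hP2 C2 hC2 hP2col hQ2col
  have hD3 := colsum_inv_mul P3 Q3 hP3 C3 hC3 hP3col hQ3col
  have hS3 : ∑ i, ((1 : Matrix (Fin Ny) (Fin Ny) ℝ) ⊗ₖ (P3⁻¹ * Q3)).mulVec M i = 0 :=
    sum_mulVec_kron _ _ _ (fun j => by rw [hD3 j.2, mul_zero])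
  have hS1 : ∑ i, ((1 : Matrix (Fin Ny) (Fin Ny) ℝ) ⊗ₖ (P1⁻¹ * Q1)).mulVec
      (fun j => M j ^ (p + 1)) i = 0 :=
    sum_mulVec_kron _ _ _ (fun j => by rw [hD1 j.2, mul_zero])
  have hS2 : ∑ i, ((P2⁻¹ * Q2) ⊗ₖ B).mulVec M i = 0 :=
    sum_mulVec_kron _ _ _ (fun j => by rw [hD2 j.1, zero_mul])
  have hsum : ∑ i, ((V i - U i) / Δt
        + ((1 : Matrix (Fin Ny) (Fin Ny) ℝ) ⊗ₖ (P3⁻¹ * Q3)).mulVec M i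
        + (1 / ((p : ℝ) + 1)) *
            ((1 : Matrix (Fin Ny) (Fin Ny) ℝ) ⊗ₖ (P1⁻¹ * Q1)).mulVec
              (fun j => M j ^ (p + 1)) i
        + lam * ((P2⁻¹ * Q2) ⊗ₖ B).mulVec M i) = 0 :=
    Finset.sum_eq_zero fun i _ => hscheme i
  simp only [Finset.sum_add_distrib, ← Finset.mul_sum, hS3, hS1, hS2,
    mul_zero, add_zero] at hsum
  have h2 : (∑ i, (V i - U i)) / Δt = 0 := by
    rw [Finset.sum_div]; exact hsum
  rw [Finset.sum_sub_distrib] at h2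
  have h3 : ∑ i, V i - ∑ i, U i = 0 := by
    field_simp at h2
    linarith [h2]
  linarith [h3]
end

section
/- Let N be an even positive integer and let q : ℤ/Nℤ → ℝ satisfy q(−k) = −q(k) for all k. Let M be the real N×N matrix (indexed by Fin N) defined by M_{i,j} = q(j − i) for every row i except the last one, and M_{i,j} = 1 for all j when i is the last index. Then the nonzero vector v with v_j = (−1)^j satisfies M v = 0; in particular M is not invertible. -/
open Matrix

/-- For an even number `N` of grid points, the matrix whose rows (except the
last one) are circulant with an odd stencil `q` and whose last row consists
of ones kills the alternating vector `v j = (-1)^j`; in particular it is not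
invertible. -/
theorem circulant_odd_stencil_with_ones_row_not_invertible
    (N : ℕ) (hN : 0 < N) (hNeven : Even N)
    (q : ZMod N → ℝ) (hq : ∀ k : ZMod N, q (-k) = -q k)
    (M : Matrix (Fin N) (Fin N) ℝ)
    (hM : ∀ i j : Fin N, i.val ≠ N - 1 →
      M i j = q ((j.val : ZMod N) - (i.val : ZMod N)))
    (hMlast : ∀ i j : Fin N, i.val = N - 1 → M i j = 1)
    (v : Fin N → ℝ) (hv : ∀ j : Fin N, v j = (-1 : ℝ) ^ (j : ℕ)) :
    v ≠ 0 ∧ M.mulVec v = 0 ∧ ¬ IsUnit M := by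
  haveI : NeZero N := ⟨hN.ne'⟩
  have h2 : (2 : ℕ) ∣ N := hNeven.two_dvd
  -- (-1)^a only depends on parity
  have key : ∀ a b : ℕ, a % 2 = b % 2 → (-1 : ℝ) ^ a = (-1) ^ b := by
    intro a b h
    rw [← Nat.div_add_mod a 2, ← Nat.div_add_mod b 2, h, pow_add, pow_add,
      pow_mul, pow_mul]
    norm_num
  set e : ZMod N → ℝ := fun k => (-1 : ℝ) ^ k.val with he
  have hpow : ∀ m : ℕ, (-1 : ℝ) ^ (m % N) = (-1) ^ m := fun m =>
    key _ _ (Nat.mod_mod_of_dvd m h2)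
  have he_add : ∀ a b : ZMod N, e (a + b) = e a * e b := by
    intro a b
    simp only [he]
    rw [ZMod.val_add, hpow, pow_add]
  have he_sq : ∀ a : ZMod N, e a * e a = 1 := by
    intro a; simp only [he, ← pow_add]
    exact Even.neg_one_pow ⟨a.val, rfl⟩
  have he_ne : ∀ a : ZMod N, e a ≠ 0 := by
    intro a h0
    have := he_sq a
    rw [h0, mul_zero] at this
    norm_num at this
  have he_neg : ∀ a : ZMod N, e (-a) = e a := by
    intro a
    have h1 : e a * e (-a) = 1 := by
      rw [← he_add, add_neg_cancel]
      simp [he, ZMod.val_zero]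
    have h2' := he_sq a
    exact mul_left_cancel₀ (he_ne a) (h1.trans h2'.symm)
  have hS : ∑ k : ZMod N, q k * e k = 0 := by
    have h := Fintype.sum_equiv (Equiv.neg (ZMod N))
      (fun k => q k * e k) (fun k => q (-k) * e (-k)) (by intro x; simp)
    have h2' : ∑ k : ZMod N, q (-k) * e (-k) = -∑ k : ZMod N, q k * e k := by
      rw [← Finset.sum_neg_distrib]
      refine Finset.sum_congr rfl fun k _ => ?_
      rw [hq, he_neg]; ring
    linarith [h, h2']
  -- equivalence Fin N ≃ ZMod N
  let eqv : Fin N ≃ ZMod N :=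
    { toFun := fun j => (j.val : ZMod N)
      invFun := fun k => ⟨k.val, ZMod.val_lt k⟩
      left_inv := fun j => by
        ext; simp [ZMod.val_natCast_of_lt j.isLt]
      right_inv := fun k => by simp [ZMod.natCast_val] }
  have hv0 : v ≠ 0 := by
    intro h0
    have := hv ⟨0, hN⟩
    rw [h0] at this
    simp at this
  have hmul : M.mulVec v = 0 := by
    funext i
    by_cases hi : i.val = N - 1
    · have : ∑ j : Fin N, M i j * v j = ∑ j : Fin N, (-1 : ℝ) ^ (j : ℕ) := by
        refine Finset.sum_congr rfl fun j _ => ?_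
        rw [hMlast i j hi, hv, one_mul]
      rw [Matrix.mulVec, Pi.zero_apply]
      show ∑ j : Fin N, M i j * v j = 0
      rw [this, Fin.sum_univ_eq_sum_range (fun j => (-1 : ℝ) ^ j)]
      rw [neg_one_geom_sum]
      simp [hNeven]
    · have step1 : ∑ j : Fin N, M i j * v j
        = ∑ k : ZMod N, q (k - (i.val : ZMod N)) * e k := by
        refine Fintype.sum_equiv eqv _ _ fun j => ?_
        rw [hM i j hi, hv]
        simp only [eqv, Equiv.coe_fn_mk, he]
        rw [ZMod.val_natCast, hpow]
      have step2 : ∑ k : ZMod N, q (k - (i.val : ZMod N)) * e k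
        = ∑ k : ZMod N, q k * (e k * e (i.val : ZMod N)) := by
        refine Fintype.sum_equiv (Equiv.addRight ((i.val : ZMod N))).symm _ _ fun k => ?_
        simp only [Equiv.coe_addRight, Equiv.symm_apply_apply, he_add,
          Equiv.coe_fn_symm_mk, Equiv.addRight_symm_apply]
        rw [sub_eq_add_neg, he_neg, mul_assoc, he_sq, mul_one]
      rw [Matrix.mulVec, Pi.zero_apply]
      show ∑ j : Fin N, M i j * v j = 0
      rw [step1, step2]
      have : ∑ k : ZMod N, q k * (e k * e (i.val : ZMod N))
        = (∑ k : ZMod N, q k * e k) * e (i.val : ZMod N) := by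
        rw [Finset.sum_mul]; exact Finset.sum_congr rfl fun k _ => by ring
      rw [this, hS, zero_mul]
  refine ⟨hv0, hmul, ?_⟩
  intro hU
  have hdet : IsUnit M.det := (Matrix.isUnit_iff_isUnit_det M).mp hU
  have hinv : M⁻¹ * M = 1 := Matrix.nonsing_inv_mul M hdet
  have : v = 0 := by
    calc v = (1 : Matrix (Fin N) (Fin N) ℝ).mulVec v := by rw [Matrix.one_mulVec]
    _ = (M⁻¹ * M).mulVec v := by rw [hinv]
    _ = M⁻¹.mulVec (M.mulVec v) := by rw [Matrix.mulVec_mulVec]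
    _ = 0 := by rw [hmul, Matrix.mulVec_zero]
  exact hv0 this
end

section
/- Let f : ℝ → ℝ be seven times continuously differentiable and x ∈ ℝ. Define for h ≠ 0 the truncation error E(h) = (1/3)(f'(x−h) + f'(x+h)) + f'(x) − (14/9)·(f(x+h) − f(x−h))/(2h) − (1/9)·(f(x+2h) − f(x−2h))/(4h). Then E(h) = O(h⁶) as h → 0, i.e. there exist C > 0 and h₀ > 0 such that |E(h)| ≤ C h⁶ for all 0 < |h| ≤ h₀. Hence the compact scheme with coefficients α = 1/3, a = 14/9, b = 1/9 approximates the first derivative to sixth order. -/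
open Set Finset

private lemma idw_eq {n m : ℕ} {g : ℝ → ℝ} (hg : ContDiff ℝ n g) (hm : m ≤ n)
    {s : Set ℝ} (hs : UniqueDiffOn ℝ s) {y : ℝ} (hy : y ∈ s) :
    iteratedDerivWithin m g s y = iteratedDeriv m g y := by
  rw [iteratedDerivWithin_eq_iteratedFDerivWithin, iteratedDeriv_eq_iteratedFDeriv]
  have h := (contDiff_iff_ftaylorSeries.mp (hg.of_le le_rfl)).hasFTaylorSeriesUpToOn s
  rw [← (h.eq_iteratedFDerivWithin_of_uniqueDiffOn (by exact_mod_cast hm) hs hy)]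
  rfl

private lemma onesided {g : ℝ → ℝ} {n : ℕ} (hg : ContDiff ℝ (n + 1) g) {C : ℝ}
    (hC : ∀ y ∈ Icc (0:ℝ) 1, |iteratedDeriv (n+1) g y| ≤ C) :
    ∀ t ∈ Icc (0:ℝ) 1,
      |g t - ∑ k ∈ Finset.range (n+1), iteratedDeriv k g 0 * t ^ k / (Nat.factorial k)| ≤
        C * t ^ (n+1) / (Nat.factorial n) := by
  intro t ht
  have huniq : UniqueDiffOn ℝ (Icc (0:ℝ) 1) := uniqueDiffOn_Icc one_pos
  have key := taylor_mean_remainder_bound (f := g) (a := (0:ℝ)) (b := 1) (C := C) (n := n)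
    (by norm_num) (hg.contDiffOn) ht ?_
  · have heq : taylorWithinEval g n (Icc (0:ℝ) 1) 0 t
        = ∑ k ∈ Finset.range (n+1), iteratedDeriv k g 0 * t ^ k / (Nat.factorial k) := by
      rw [taylor_within_apply]
      refine Finset.sum_congr rfl fun k hk => ?_
      have hk' : k ≤ n + 1 := by have := Finset.mem_range.mp hk; omega
      rw [idw_eq (n := n + 1) (m := k) (by exact_mod_cast hg) hk' huniq (by norm_num : (0:ℝ) ∈ Icc (0:ℝ) 1)]
      simp [smul_eq_mul]
      ring
    rw [heq] at key
    simpa [Real.norm_eq_abs] using key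
  · intro y hy
    rw [idw_eq (n := n + 1) (m := n + 1) (by exact_mod_cast hg) le_rfl huniq hy]
    simpa [Real.norm_eq_abs] using hC y hy

private lemma twosided (g : ℝ → ℝ) (n : ℕ) (hg : ContDiff ℝ (n + 1) g) (x : ℝ) :
    ∃ M > 0, ∀ h : ℝ, |h| ≤ 1 →
      |g (x + h) - ∑ k ∈ Finset.range (n+1), iteratedDeriv k g x * h ^ k / (Nat.factorial k)| ≤
        M * |h| ^ (n+1) := by
  obtain ⟨C, hC⟩ := (isCompact_Icc (a := x - 1) (b := x + 1)).exists_bound_of_continuousOn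
    ((hg.continuous_iteratedDeriv (n+1) (by exact_mod_cast le_rfl)).continuousOn)
  have hC' : ∀ y ∈ Icc (x - 1) (x + 1), |iteratedDeriv (n+1) g y| ≤ |C| := fun y hy =>
    le_trans (by simpa [Real.norm_eq_abs] using hC y hy) (le_abs_self C)
  refine ⟨|C| / (Nat.factorial n) + 1, by positivity, fun h hh => ?_⟩
  -- the shifted functions
  have hgp : ContDiff ℝ (n + 1) (fun t => g (x + t)) :=
    hg.comp (contDiff_const.add contDiff_id)
  have hgm : ContDiff ℝ (n + 1) (fun t => g (x + -t)) :=
    hg.comp (contDiff_const.add contDiff_id.neg)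
  have hidp : ∀ k (t : ℝ), iteratedDeriv k (fun t => g (x + t)) t = iteratedDeriv k g (x + t) := by
    intro k t; rw [iteratedDeriv_comp_const_add]
  have hidm : ∀ k (t : ℝ), iteratedDeriv k (fun t => g (x + -t)) t
      = (-1 : ℝ) ^ k * iteratedDeriv k g (x + -t) := by
    intro k t
    have := iteratedDeriv_comp_neg k (fun u => g (x + u)) t
    simpa [hidp, smul_eq_mul] using this
  rcases le_or_gt 0 h with hpos | hneg
  · have habs : |h| = h := abs_of_nonneg hpos
    have ht : h ∈ Icc (0:ℝ) 1 := ⟨hpos, by linarith [hh, habs.ge, habs.le]⟩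
    have key := onesided hgp (C := |C|) (fun y hy => by
      rw [hidp]
      exact hC' (x + y) ⟨by linarith [hy.1], by linarith [hy.2]⟩) h ht
    simp only [hidp, add_zero] at key
    calc |g (x + h) - ∑ k ∈ Finset.range (n+1), iteratedDeriv k g x * h ^ k / (Nat.factorial k)|
        ≤ |C| * h ^ (n+1) / (Nat.factorial n) := key
      _ ≤ (|C| / (Nat.factorial n) + 1) * |h| ^ (n+1) := by
          rw [habs]
          have h1 : (0:ℝ) ≤ h ^ (n+1) := by positivity
          have h2 : |C| * h ^ (n + 1) / (Nat.factorial n : ℝ)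
              = (|C| / (Nat.factorial n : ℝ)) * h ^ (n + 1) := by ring
          rw [h2]
          nlinarith
  · have habs : |h| = -h := abs_of_neg hneg
    have ht : -h ∈ Icc (0:ℝ) 1 := ⟨by linarith, by linarith [hh, habs.le]⟩
    have key := onesided hgm (C := |C|) (fun y hy => by
      rw [hidm]
      rw [abs_mul, abs_pow, abs_neg, abs_one, one_pow, one_mul]
      exact hC' (x + -y) ⟨by linarith [hy.2], by linarith [hy.1]⟩) (-h) ht
    simp only [hidm, neg_zero, add_zero, neg_neg] at key
    have hsum : ∑ k ∈ Finset.range (n+1),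
        (-1:ℝ) ^ k * iteratedDeriv k g x * (-h) ^ k / (Nat.factorial k)
        = ∑ k ∈ Finset.range (n+1), iteratedDeriv k g x * h ^ k / (Nat.factorial k) := by
      refine Finset.sum_congr rfl fun k _ => ?_
      rw [show (-1:ℝ) ^ k * iteratedDeriv k g x * (-h) ^ k
          = iteratedDeriv k g x * ((-1) * -h) ^ k by rw [mul_pow]; ring]
      norm_num
    calc |g (x + h) - ∑ k ∈ Finset.range (n+1), iteratedDeriv k g x * h ^ k / (Nat.factorial k)|
        ≤ |C| * (-h) ^ (n+1) / (Nat.factorial n) := by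
          rw [← hsum]
          exact key
      _ ≤ (|C| / (Nat.factorial n) + 1) * |h| ^ (n+1) := by
          rw [habs]
          have h1 : (0:ℝ) ≤ (-h) ^ (n+1) := pow_nonneg (by linarith) _
          have h2 : |C| * (-h) ^ (n + 1) / (Nat.factorial n : ℝ)
              = (|C| / (Nat.factorial n : ℝ)) * (-h) ^ (n + 1) := by ring
          rw [h2]
          nlinarith

set_option maxHeartbeats 2000000 in
/-- The compact first-derivative scheme with coefficients `α = 1/3`,
`a = 14/9`, `b = 1/9` is sixth-order accurate: for `f ∈ C⁷` the truncation
error `E(h)` satisfies `|E(h)| ≤ C h⁶` for all small `h ≠ 0`. -/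
theorem compact_first_derivative_sixth_order
    (f : ℝ → ℝ) (hf : ContDiff ℝ 7 f) (x : ℝ)
    (E : ℝ → ℝ)
    (hE : ∀ h : ℝ, h ≠ 0 → E h =
      (1 / 3) * (deriv f (x - h) + deriv f (x + h)) + deriv f x
        - (14 / 9) * (f (x + h) - f (x - h)) / (2 * h)
        - (1 / 9) * (f (x + 2 * h) - f (x - 2 * h)) / (4 * h)) :
    ∃ C > 0, ∃ h₀ > 0, ∀ h : ℝ, h ≠ 0 → |h| ≤ h₀ → |E h| ≤ C * h ^ 6 := by
  have hf7 : ContDiff ℝ ((6:ℕ) + 1) f := by exact_mod_cast hf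
  have hdf : ContDiff ℝ ((5:ℕ) + 1) (deriv f) := by
    have h6 : ContDiff ℝ ((6:ℕ)) (deriv f) := by
      have := (contDiff_succ_iff_deriv.mp (show ContDiff ℝ ((6:ℕ) + 1) f from hf7)).2.2
      exact_mod_cast this
    exact_mod_cast h6
  obtain ⟨M1, hM1pos, hM1⟩ := twosided f 6 hf7 x
  obtain ⟨M2, hM2pos, hM2⟩ := twosided (deriv f) 5 hdf x
  refine ⟨30 * M1 + M2 + 1, by positivity, 1/2, by norm_num, fun h hne hh => ?_⟩
  have hh1 : |h| ≤ 1 := le_trans hh (by norm_num)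
  have hh2 : |2 * h| ≤ 1 := by rw [abs_mul, abs_two]; linarith
  have a1 := hM1 h hh1
  have a2 := hM1 (-h) (by rwa [abs_neg])
  have a3 := hM1 (2 * h) hh2
  have a4 := hM1 (-(2 * h)) (by rwa [abs_neg])
  have b1 := hM2 h hh1
  have b2 := hM2 (-h) (by rwa [abs_neg])
  simp only [show (6:ℕ) + 1 = 7 from rfl, show (5:ℕ) + 1 = 6 from rfl, abs_neg] at a1 a2 a3 a4 b1 b2
  have habs2 : |2 * h| ^ 7 = 128 * |h| ^ 7 := by
    rw [abs_mul, abs_two, mul_pow]; norm_num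
  rw [habs2] at a3 a4
  -- basic facts about |h|
  have hapos : (0:ℝ) < |h| := abs_pos.mpr hne
  have hh6 : |h| ^ 6 = h ^ 6 := by
    rw [← abs_pow]; exact abs_of_nonneg (by positivity)
  have h7 : |h| ^ 7 = |h| * h ^ 6 := by
    rw [show (7:ℕ) = 1 + 6 from rfl, pow_add, pow_one, hh6]
  rw [hh6] at b1 b2
  rw [h7] at a1 a2 a3 a4
  -- derivative relations
  have hd1 : deriv f x = iteratedDeriv 1 f x := by rw [iteratedDeriv_one]
  have hQ : ∀ k : ℕ, iteratedDeriv k (deriv f) x = iteratedDeriv (k + 1) f x := fun k => by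
    rw [iteratedDeriv_succ']
  -- the key algebraic identity
  have key : E h =
      (1/3) * ((deriv f (x + -h)
          - ∑ k ∈ Finset.range 6, iteratedDeriv k (deriv f) x * (-h) ^ k / (Nat.factorial k))
        + (deriv f (x + h)
          - ∑ k ∈ Finset.range 6, iteratedDeriv k (deriv f) x * h ^ k / (Nat.factorial k)))
      - (14/9) * ((f (x + h)
          - ∑ k ∈ Finset.range 7, iteratedDeriv k f x * h ^ k / (Nat.factorial k))
        - (f (x + -h)
          - ∑ k ∈ Finset.range 7, iteratedDeriv k f x * (-h) ^ k / (Nat.factorial k))) / (2 * h)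
      - (1/9) * ((f (x + 2 * h)
          - ∑ k ∈ Finset.range 7, iteratedDeriv k f x * (2 * h) ^ k / (Nat.factorial k))
        - (f (x + -(2 * h))
          - ∑ k ∈ Finset.range 7, iteratedDeriv k f x * (-(2 * h)) ^ k / (Nat.factorial k))) / (4 * h) := by
    rw [hE h hne]
    have hx1 : x - h = x + -h := by ring
    have hx2 : x - 2 * h = x + -(2 * h) := by ring
    rw [hx1, hx2, hd1]
    simp only [Finset.sum_range_succ, Finset.sum_range_zero, hQ]
    norm_num [Nat.factorial]
    field_simp
    ring
  rw [key]
  set t2 := deriv f (x + -h)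
      - ∑ k ∈ Finset.range 6, iteratedDeriv k (deriv f) x * (-h) ^ k / (Nat.factorial k) with ht2
  set t1 := deriv f (x + h)
      - ∑ k ∈ Finset.range 6, iteratedDeriv k (deriv f) x * h ^ k / (Nat.factorial k) with ht1
  set r1 := f (x + h)
      - ∑ k ∈ Finset.range 7, iteratedDeriv k f x * h ^ k / (Nat.factorial k) with hr1
  set r2 := f (x + -h)
      - ∑ k ∈ Finset.range 7, iteratedDeriv k f x * (-h) ^ k / (Nat.factorial k) with hr2
  set s1 := f (x + 2 * h)
      - ∑ k ∈ Finset.range 7, iteratedDeriv k f x * (2 * h) ^ k / (Nat.factorial k) with hs1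
  set s2 := f (x + -(2 * h))
      - ∑ k ∈ Finset.range 7, iteratedDeriv k f x * (-(2 * h)) ^ k / (Nat.factorial k) with hs2
  -- triangle inequality
  have tri : |(1/3) * (t2 + t1) - (14/9) * (r1 - r2) / (2 * h) - (1/9) * (s1 - s2) / (4 * h)|
      ≤ |(1/3) * (t2 + t1)| + |(14/9) * (r1 - r2) / (2 * h)| + |(1/9) * (s1 - s2) / (4 * h)| := by
    have tri1 : ∀ a b : ℝ, |a - b| ≤ |a| + |b| := fun a b => by
      simpa [sub_eq_add_neg, abs_neg] using abs_add_le a (-b)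
    calc |(1/3) * (t2 + t1) - (14/9) * (r1 - r2) / (2 * h) - (1/9) * (s1 - s2) / (4 * h)|
        ≤ |(1/3) * (t2 + t1) - (14/9) * (r1 - r2) / (2 * h)| + |(1/9) * (s1 - s2) / (4 * h)| :=
          tri1 _ _
      _ ≤ |(1/3) * (t2 + t1)| + |(14/9) * (r1 - r2) / (2 * h)| + |(1/9) * (s1 - s2) / (4 * h)| := by
          linarith [tri1 ((1/3) * (t2 + t1)) ((14/9) * (r1 - r2) / (2 * h))]
  have e1 : |(1/3) * (t2 + t1)| ≤ (2/3) * M2 * h ^ 6 := by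
    rw [abs_mul]
    have : |t2 + t1| ≤ 2 * (M2 * h ^ 6) := by
      calc |t2 + t1| ≤ |t2| + |t1| := abs_add_le _ _
        _ ≤ 2 * (M2 * h ^ 6) := by linarith
    rw [show |(1:ℝ)/3| = 1/3 by norm_num]
    linarith
  have e2 : |(14/9) * (r1 - r2) / (2 * h)| ≤ (28/9) * M1 * h ^ 6 := by
    rw [abs_div, abs_mul, abs_mul, abs_two]
    rw [show |(14:ℝ)/9| = 14/9 by norm_num]
    rw [div_le_iff₀ (by positivity)]
    have hr : |r1 - r2| ≤ 2 * (M1 * (|h| * h ^ 6)) := by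
      calc |r1 - r2| ≤ |r1| + |r2| := by
            simpa [sub_eq_add_neg, abs_neg] using abs_add_le r1 (-r2)
        _ ≤ 2 * (M1 * (|h| * h ^ 6)) := by linarith
    nlinarith [mul_nonneg hM1pos.le (mul_nonneg (abs_nonneg h) (show (0:ℝ) ≤ h ^ 6 by positivity))]
  have e3 : |(1/9) * (s1 - s2) / (4 * h)| ≤ (64/9) * M1 * h ^ 6 := by
    rw [abs_div, abs_mul, abs_mul]
    rw [show |(1:ℝ)/9| = 1/9 by norm_num, show |(4:ℝ)| = 4 by norm_num]
    rw [div_le_iff₀ (by positivity)]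
    have hs : |s1 - s2| ≤ 2 * (128 * M1 * (|h| * h ^ 6)) := by
      calc |s1 - s2| ≤ |s1| + |s2| := by
            simpa [sub_eq_add_neg, abs_neg] using abs_add_le s1 (-s2)
        _ ≤ 2 * (128 * M1 * (|h| * h ^ 6)) := by linarith
    nlinarith [mul_nonneg hM1pos.le (mul_nonneg (abs_nonneg h) (show (0:ℝ) ≤ h ^ 6 by positivity))]
  have h6nn : (0:ℝ) ≤ h ^ 6 := by positivity
  nlinarith [tri, e1, e2, e3]
end

section
/- Let f : ℝ → ℝ be five times continuously differentiable and x ∈ ℝ. Define for h ≠ 0 the truncation error E(h) = (1/4)(f'(x−h) + f'(x+h)) + f'(x) − (3/2)·(f(x+h) − f(x−h))/(2h). Then E(h) = O(h⁴) as h → 0. Hence the compact scheme with coefficients α = 1/4, a = 3/2, b = 0 approximates the first derivative to fourth order. -/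
/-!
Expand `f(x ± h)` to order five and `f'(x ± h)` to order four by Taylor's theorem with Peano
remainder. In `2h·E(h)` every term of order at most four in `h` cancels, leaving
`h⁵ f⁽⁵⁾(x)/60 + o(h⁵)`; dividing by `2h` gives `E(h) = h⁴ f⁽⁵⁾(x)/120 + o(h⁴)`.
-/

open Asymptotics Filter Topology
open scoped Nat

theorem taylor_isLittleO_add {E : Type*} [NormedAddCommGroup E] [NormedSpace ℝ E]
    {f : ℝ → E} {n : ℕ} (hf : ContDiff ℝ n f) (x : ℝ) :
    (fun h ↦ f (x + h) - ∑ k ∈ Finset.range (n + 1), (h ^ k / k !) • iteratedDeriv k f x)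
      =o[𝓝 0] fun h ↦ h ^ n := by
  have hx : Tendsto (x + ·) (𝓝 0) (𝓝 x) := by
    simpa using (continuous_const_add x).tendsto 0
  convert (taylor_isLittleO_univ (x₀ := x) hf).comp_tendsto hx using 2 with h
  · simp [taylor_within_apply, iteratedDerivWithin_univ, div_eq_inv_mul]
  · simp

theorem taylor_isLittleO_sub {E : Type*} [NormedAddCommGroup E] [NormedSpace ℝ E]
    {f : ℝ → E} {n : ℕ} (hf : ContDiff ℝ n f) (x : ℝ) :
    (fun h ↦ f (x - h) - ∑ k ∈ Finset.range (n + 1), ((-h) ^ k / k !) • iteratedDeriv k f x)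
      =o[𝓝 0] fun h ↦ h ^ n := by
  have := ((taylor_isLittleO_add hf x).comp_tendsto
    (by simpa using (continuous_neg (G := ℝ)).tendsto 0)).norm_right
  rw [← isLittleO_norm_right]
  simpa [Function.comp_def, ← sub_eq_add_neg, norm_pow] using this

/-- `2h·E(h)`: the truncation error with its denominator cleared, so also defined at `h = 0`. -/
noncomputable def scaledTruncationError (f : ℝ → ℝ) (x h : ℝ) : ℝ :=
  h / 2 * (deriv f (x - h) + deriv f (x + h)) + 2 * h * deriv f x
    - 3 / 2 * (f (x + h) - f (x - h))

theorem scaledTruncationError_sub_isLittleO {f : ℝ → ℝ} (hf : ContDiff ℝ 5 f) (x : ℝ) :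
    (fun h ↦ scaledTruncationError f x h - h ^ 5 * iteratedDeriv 5 f x / 60)
      =o[𝓝 0] fun h ↦ h ^ 5 := by
  have hf' : ContDiff ℝ 4 (deriv f) := hf.deriv'
  have hmul : ∀ {u : ℝ → ℝ}, u =o[𝓝 0] (· ^ 4) → (fun h ↦ h * u h) =o[𝓝 0] (· ^ 5) :=
    fun hu ↦ ((isBigO_refl (fun h : ℝ ↦ h) _).mul_isLittleO hu).congr_right fun h ↦ by ring
  have := (((hmul (taylor_isLittleO_sub (n := 4) hf' x)).add
    (hmul (taylor_isLittleO_add (n := 4) hf' x))).const_mul_left (1 / 2)).sub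
    (((taylor_isLittleO_add (n := 5) hf x).sub
      (taylor_isLittleO_sub (n := 5) hf x)).const_mul_left (3 / 2))
  refine this.congr_left fun h ↦ ?_
  simp only [scaledTruncationError, Finset.sum_range_succ, Finset.sum_range_zero,
    ← iteratedDeriv_succ', iteratedDeriv_zero, smul_eq_mul, Nat.factorial]
  rw [iteratedDeriv_one]
  push_cast
  ring

theorem scaledTruncationError_isBigO {f : ℝ → ℝ} (hf : ContDiff ℝ 5 f) (x : ℝ) :
    scaledTruncationError f x =O[𝓝 0] fun h ↦ h ^ 5 :=
  ((scaledTruncationError_sub_isLittleO hf x).isBigO.add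
    ((isBigO_refl _ _).const_mul_left (iteratedDeriv 5 f x / 60))).congr_left fun h ↦ by ring

theorem exists_abs_le_mul_pow_of_isBigO {g : ℝ → ℝ} {n : ℕ} (hg : g =O[𝓝 0] fun h ↦ h ^ n) :
    ∃ C > 0, ∃ h₀ > 0, ∀ h, |h| ≤ h₀ → |g h| ≤ C * |h| ^ n := by
  obtain ⟨C, hC, hCg⟩ := hg.exists_pos
  obtain ⟨ε, hε, hball⟩ := Metric.eventually_nhds_iff.mp hCg.bound
  refine ⟨C, hC, ε / 2, by positivity, fun h hh ↦ ?_⟩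
  simpa using hball (show dist h 0 < ε by rw [Real.dist_0_eq_abs]; linarith)

/-- The compact first-derivative scheme with coefficients `α = 1/4`,
`a = 3/2`, `b = 0` is fourth-order accurate: for `f ∈ C⁵` the truncation
error `E(h)` satisfies `|E(h)| ≤ C h⁴` for all small `h ≠ 0`. -/
theorem compact_first_derivative_fourth_order
    (f : ℝ → ℝ) (hf : ContDiff ℝ 5 f) (x : ℝ)
    (E : ℝ → ℝ)
    (hE : ∀ h : ℝ, h ≠ 0 → E h =
      (1 / 4) * (deriv f (x - h) + deriv f (x + h)) + deriv f x
        - (3 / 2) * (f (x + h) - f (x - h)) / (2 * h)) :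
    ∃ C > 0, ∃ h₀ > 0, ∀ h : ℝ, h ≠ 0 → |h| ≤ h₀ → |E h| ≤ C * h ^ 4 := by
  obtain ⟨C, hC, h₀, hh₀, hbound⟩ :=
    exists_abs_le_mul_pow_of_isBigO (scaledTruncationError_isBigO hf x)
  refine ⟨C / 2, by positivity, h₀, hh₀, fun h hne hh ↦ ?_⟩
  have hEh : E h = scaledTruncationError f x h / (2 * h) := by
    rw [hE h hne, scaledTruncationError]
    field_simp
    ring
  calc |E h| = |scaledTruncationError f x h| / (2 * |h|) := by rw [hEh, abs_div, abs_mul, abs_two]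
    _ ≤ C * |h| ^ 5 / (2 * |h|) := by gcongr; exact hbound h hh
    _ = C / 2 * h ^ 4 := by
      rw [← Even.pow_abs ⟨2, rfl⟩ h]
      field_simp
end

section
/- Let f : ℝ → ℝ be six times continuously differentiable and x ∈ ℝ, and let α, a, b be real numbers satisfying the order-2 condition 1 + 2α = a + b. Define for h ≠ 0 the truncation error E(h) = α(f'(x−h) + f'(x+h)) + f'(x) − a·(f(x+h) − f(x−h))/(2h) − b·(f(x+2h) − f(x−2h))/(4h). Then E(h) = O(h²) as h → 0. -/
/-!
Using `1 + 2α = a + b` to absorb the `f'(x)` terms, `E(h)` becomes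
`α (f'(x+h) + f'(x-h) - 2 f'(x))` minus `a/2` and `b/4` times `D(h)/h` and `D(2h)/h`, where
`D(t) = f(x+t) - f(x-t) - 2t f'(x)`. Expanding `f'` to order 2 and `f` to order 3 around `x`
with little-o remainders, the odd, resp. even, Taylor terms cancel in these symmetric
combinations, so `f'(x+h) + f'(x-h) - 2 f'(x) = O(h²)` and `D(t) = O(t³)`.
-/

open Filter Topology Asymptotics Set

theorem Asymptotics.IsBigO.exists_pos_bound_of_nhdsNE_zero {E F : Type*} [Norm E]
    [SeminormedAddCommGroup F] {u : ℝ → E} {g : ℝ → F} (hu : u =O[𝓝[≠] 0] g) :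
    ∃ C > 0, ∃ δ > 0, ∀ h : ℝ, h ≠ 0 → |h| ≤ δ → ‖u h‖ ≤ C * ‖g h‖ := by
  obtain ⟨C, hC, hCu⟩ := hu.exists_pos
  obtain ⟨ε, hε, hball⟩ :=
    Metric.eventually_nhds_iff.1 (eventually_nhdsWithin_iff.1 hCu.bound)
  refine ⟨C, hC, ε / 2, half_pos hε, fun h hne hle => hball ?_ hne⟩
  rw [Real.dist_0_eq_abs]
  linarith

theorem Asymptotics.IsLittleO.comp_neg_pow {u : ℝ → ℝ} {n : ℕ}
    (hu : u =o[𝓝 0] fun h => h ^ n) : (fun h => u (-h)) =o[𝓝 0] fun h => h ^ n := by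
  refine (hu.comp_tendsto (by simpa using (continuous_neg (G := ℝ)).tendsto 0)).trans_isBigO ?_
  exact isBigO_of_le _ fun h => by simp [norm_pow]

theorem Asymptotics.IsBigO.comp_const_mul_pow {u : ℝ → ℝ} {n : ℕ}
    (hu : u =O[𝓝 0] fun h => h ^ n) (c : ℝ) :
    (fun h => u (c * h)) =O[𝓝 0] fun h => h ^ n := by
  have hc : Tendsto (fun h : ℝ => c * h) (𝓝 0) (𝓝 0) := by
    simpa using (continuous_const_mul c).tendsto 0
  refine (hu.comp_tendsto hc).trans ((isBigO_const_mul_self (c ^ n) _ _).congr_left ?_)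
  simp [mul_pow]

theorem Asymptotics.IsBigO.div_self_pow {l : Filter ℝ} {u : ℝ → ℝ} {n : ℕ}
    (hu : u =O[l] fun h => h ^ (n + 2)) : (fun h => u h / h) =O[l] fun h => h ^ (n + 1) := by
  refine (hu.mul (isBigO_refl (fun h => h⁻¹) l)).congr (fun h => (div_eq_mul_inv _ _).symm)
    fun h => ?_
  rcases eq_or_ne h 0 with rfl | hh
  · simp
  · field_simp
    ring

theorem taylor_isLittleO_comp_add {f : ℝ → ℝ} {n : ℕ} (hf : ContDiff ℝ n f) (x : ℝ) :
    (fun h => f (x + h) - taylorWithinEval f n univ x (x + h)) =o[𝓝 0] fun h => h ^ n := by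
  have hshift : Tendsto (fun h : ℝ => x + h) (𝓝 0) (𝓝 x) := by
    simpa using (continuous_const_add x).tendsto 0
  simpa [Function.comp_def] using (taylor_isLittleO_univ hf).comp_tendsto hshift

theorem symmetric_sum_sub_isBigO_sq {g : ℝ → ℝ} (hg : ContDiff ℝ 2 g) (x : ℝ) :
    (fun h => g (x + h) + g (x - h) - 2 * g x) =O[𝓝 0] fun h => h ^ 2 := by
  have hR := taylor_isLittleO_comp_add hg x
  have hsplit : (fun h => g (x + h) + g (x - h) - 2 * g x) = fun h =>
      (g (x + h) - taylorWithinEval g 2 univ x (x + h))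
        + (g (x + -h) - taylorWithinEval g 2 univ x (x + -h))
        + iteratedDeriv 2 g x * h ^ 2 := by
    ext h
    simp only [taylorWithinEval_succ, taylor_within_zero_eval, iteratedDerivWithin_univ,
      zero_add, iteratedDeriv_one, smul_eq_mul, Nat.factorial, sub_eq_add_neg]
    push_cast
    ring
  rw [hsplit]
  exact (hR.isBigO.add hR.comp_neg_pow.isBigO).add (isBigO_const_mul_self _ _ _)

theorem symmetric_diff_sub_isBigO_cube {f : ℝ → ℝ} (hf : ContDiff ℝ 3 f) (x : ℝ) :
    (fun h => f (x + h) - f (x - h) - 2 * h * deriv f x) =O[𝓝 0] fun h => h ^ 3 := by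
  have hR := taylor_isLittleO_comp_add hf x
  have hsplit : (fun h => f (x + h) - f (x - h) - 2 * h * deriv f x) = fun h =>
      (f (x + h) - taylorWithinEval f 3 univ x (x + h))
        - (f (x + -h) - taylorWithinEval f 3 univ x (x + -h))
        + iteratedDeriv 3 f x / 3 * h ^ 3 := by
    ext h
    simp only [taylorWithinEval_succ, taylor_within_zero_eval, iteratedDerivWithin_univ,
      zero_add, iteratedDeriv_one, smul_eq_mul, Nat.factorial, sub_eq_add_neg]
    push_cast
    ring
  rw [hsplit]
  exact (hR.isBigO.sub hR.comp_neg_pow.isBigO).add (isBigO_const_mul_self _ _ _)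

noncomputable def compactSchemeError (f : ℝ → ℝ) (α a b x h : ℝ) : ℝ :=
  α * (deriv f (x - h) + deriv f (x + h)) + deriv f x
    - a * (f (x + h) - f (x - h)) / (2 * h) - b * (f (x + 2 * h) - f (x - 2 * h)) / (4 * h)

theorem compactSchemeError_eq {f : ℝ → ℝ} {α a b x h : ℝ} (hcond : 1 + 2 * α = a + b)
    (hh : h ≠ 0) :
    compactSchemeError f α a b x h =
      α * (deriv f (x + h) + deriv f (x - h) - 2 * deriv f x)
        - a / 2 * ((f (x + h) - f (x - h) - 2 * h * deriv f x) / h)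
        - b / 4 * ((f (x + 2 * h) - f (x - 2 * h) - 2 * (2 * h) * deriv f x) / h) := by
  unfold compactSchemeError
  field_simp
  linear_combination (8 * h * deriv f x) * hcond

theorem compactSchemeError_isBigO {f : ℝ → ℝ} (hf : ContDiff ℝ 3 f) (x : ℝ) {α a b : ℝ}
    (hcond : 1 + 2 * α = a + b) :
    (fun h => compactSchemeError f α a b x h) =O[𝓝[≠] 0] fun h => h ^ 2 := by
  have hsym := (symmetric_sum_sub_isBigO_sq (hf.deriv' (n := 2)) x).const_mul_left α
  have hcentral := symmetric_diff_sub_isBigO_cube hf x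
  have hwide := hcentral.comp_const_mul_pow 2
  refine (((hsym.sub (hcentral.div_self_pow.const_mul_left (a / 2))).sub
    (hwide.div_self_pow.const_mul_left (b / 4))).mono nhdsWithin_le_nhds).congr' ?_ .rfl
  filter_upwards [self_mem_nhdsWithin] with h hh
  exact (compactSchemeError_eq hcond hh).symm

/-- Under the order-2 condition `1 + 2α = a + b`, the compact
first-derivative scheme with coefficients `α, a, b` is second-order
accurate: for `f ∈ C⁶` the truncation error `E(h)` satisfies
`|E(h)| ≤ C h²` for all small `h ≠ 0`. -/
theorem compact_first_derivative_second_order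
    (f : ℝ → ℝ) (hf : ContDiff ℝ 6 f) (x : ℝ)
    (α a b : ℝ) (hcond : 1 + 2 * α = a + b)
    (E : ℝ → ℝ)
    (hE : ∀ h : ℝ, h ≠ 0 → E h =
      α * (deriv f (x - h) + deriv f (x + h)) + deriv f x
        - a * (f (x + h) - f (x - h)) / (2 * h)
        - b * (f (x + 2 * h) - f (x - 2 * h)) / (4 * h)) :
    ∃ C > 0, ∃ h₀ > 0, ∀ h : ℝ, h ≠ 0 → |h| ≤ h₀ → |E h| ≤ C * h ^ 2 := by
  have hE' : (fun h => compactSchemeError f α a b x h) =ᶠ[𝓝[≠] 0] E :=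
    eventually_nhdsWithin_of_forall fun h hh => (hE h hh).symm
  obtain ⟨C, hC, h₀, hh₀, hbound⟩ :=
    ((compactSchemeError_isBigO (hf.of_le (by norm_num)) x hcond).congr' hE' .rfl
      ).exists_pos_bound_of_nhdsNE_zero
  exact ⟨C, hC, h₀, hh₀, fun h hne hle => by simpa using hbound h hne hle⟩
end

section
/- Let m ≥ 2 be an even integer, let f : ℝ → ℝ be (m+2) times continuously differentiable, and let x ∈ ℝ. Suppose the real coefficients α, a, b satisfy 1 + 2α = a + b and, for every integer l with 1 ≤ l ≤ m/2 − 1, 2α/(2l)! = 2(4^l b + a)/(2l+2)!. Define for h ≠ 0 the truncation error E(h) = α(f''(x−h) + f''(x+h)) + f''(x) − b·(f(x+2h) − 2f(x) + f(x−2h))/(4h²) − a·(f(x+h) − 2f(x) + f(x−h))/h². Then E(h) = O(h^m) as h → 0; i.e. the compact second-derivative scheme has order m. -/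
/-!
Taylor-expand `f` with remainder `O(h^(m+2))` and `f''` with remainder `O(h^m)` around `x`.
In the symmetric sums `f(x + h) + f(x - h)` and `f''(x + h) + f''(x - h)` the odd Taylor terms
cancel, so the scheme applied to the Taylor parts leaves `f''(x) + ∑_{j < m/2} c_j f⁽²ʲ⁺²⁾(x) h²ʲ`
with `c_j = 2α/(2j)! - 2(4ʲ b + a)/(2j+2)!`. The order conditions say exactly that `c_0 = -1` and
`c_j = 0` for `1 ≤ j < m/2`, so this vanishes and `E(h)` is a combination of Taylor remainders:
`O(h^m)` for `f''`, and `O(h^(m+2)) / h²` for `f`.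
-/

open Set Filter Topology Asymptotics Finset
open scoped Nat

section EvenPart

variable {R M : Type*} [CommRing R] [AddCommGroup M] [Module R M]

theorem sum_range_two_mul_smul_add_neg (c : ℕ → M) (t : R) (N : ℕ) :
    ∑ k ∈ range (2 * N), t ^ k • c k + ∑ k ∈ range (2 * N), (-t) ^ k • c k =
      (2 : R) • ∑ j ∈ range N, t ^ (2 * j) • c (2 * j) := by
  induction N with
  | zero => simp
  | succ N ih =>
    rw [show 2 * (N + 1) = 2 * N + 1 + 1 by ring]
    simp only [sum_range_succ, smul_add, ← ih]
    rw [Even.neg_pow (even_two_mul N), Odd.neg_pow (odd_two_mul_add_one N), neg_smul, two_smul]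
    abel

end EvenPart

section Taylor

variable {E : Type*} [NormedAddCommGroup E] [NormedSpace ℝ E]

theorem taylor_isBigO {g : ℝ → E} {n : ℕ} (hg : ContDiff ℝ n g) (x : ℝ) :
    (fun h => g (x + h) - ∑ k ∈ range n, h ^ k • ((k ! : ℝ)⁻¹ • iteratedDeriv k g x))
      =O[𝓝 0] fun h => h ^ n := by
  have hx : Tendsto (fun h => x + h) (𝓝 0) (𝓝 x) := by
    simpa using (continuous_const_add x).tendsto 0
  have hlead : (fun h : ℝ => h ^ n • ((n ! : ℝ)⁻¹ • iteratedDeriv n g x)) =O[𝓝 0]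
      fun h => h ^ n := by
    simpa using (isBigO_refl (fun h : ℝ => h ^ n) _).smul
      (isBigO_const_one ℝ ((n ! : ℝ)⁻¹ • iteratedDeriv n g x) (𝓝 0))
  have hrem : (fun h => g (x + h) - taylorWithinEval g n univ x (x + h)) =O[𝓝 0]
      fun h => h ^ n := by
    simpa [Function.comp_def] using (taylor_isLittleO_univ hg).isBigO.comp_tendsto hx
  refine (hrem.add hlead).congr_left fun h => ?_
  simp only [taylor_within_apply, sum_range_succ, iteratedDerivWithin_univ, mul_smul,
    add_sub_cancel_left, smul_comm (h ^ _), sub_add_eq_sub_sub, sub_add_cancel]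

noncomputable def evenTaylorSum (g : ℝ → E) (x : ℝ) (N : ℕ) (h : ℝ) : E :=
  (2 : ℝ) • ∑ j ∈ range N, h ^ (2 * j) • (((2 * j)! : ℝ)⁻¹ • iteratedDeriv (2 * j) g x)

theorem evenTaylorSum_isBigO {g : ℝ → E} {N : ℕ} (hg : ContDiff ℝ (2 * N : ℕ) g) (x : ℝ) :
    (fun h => g (x + h) + g (x - h) - evenTaylorSum g x N h) =O[𝓝 0] fun h => h ^ (2 * N) := by
  have hneg := (taylor_isBigO hg x).comp_tendsto (by simpa using continuous_neg.tendsto (0 : ℝ))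
    |>.congr_right fun h => (even_two_mul N).neg_pow h
  refine ((taylor_isBigO hg x).add hneg).congr_left fun h => ?_
  rw [Function.comp_apply, evenTaylorSum,
    ← sum_range_two_mul_smul_add_neg (fun k => (k ! : ℝ)⁻¹ • iteratedDeriv k g x), ← sub_eq_add_neg]
  abel

end Taylor

theorem iteratedDeriv_iteratedDeriv {𝕜 F : Type*} [NontriviallyNormedField 𝕜]
    [NormedAddCommGroup F] [NormedSpace 𝕜 F] (m n : ℕ) (f : 𝕜 → F) :
    iteratedDeriv m (iteratedDeriv n f) = iteratedDeriv (m + n) f := by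
  simp only [iteratedDeriv_eq_iterate, Function.iterate_add_apply]

namespace Asymptotics.IsBigO

variable {u : ℝ → ℝ} {n : ℕ}

theorem comp_const_mul (hu : u =O[𝓝 0] fun h => h ^ n) (c : ℝ) :
    (fun h => u (c * h)) =O[𝓝 0] fun h => h ^ n :=
  (hu.comp_tendsto (by simpa using (continuous_const_mul c).tendsto 0)).trans
    ((isBigO_const_mul_self (c ^ n) (fun h : ℝ => h ^ n) _).congr_left
      fun h => (mul_pow c h n).symm)

theorem div_sq (hu : u =O[𝓝 0] fun h => h ^ (n + 2)) :
    (fun h => u h / h ^ 2) =O[𝓝[≠] 0] fun h => h ^ n := by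
  refine ((hu.mono nhdsWithin_le_nhds).mul (isBigO_refl (fun h : ℝ => (h ^ 2)⁻¹) _)).congr'
    (.of_forall fun h => (div_eq_mul_inv _ _).symm) ?_
  filter_upwards [self_mem_nhdsWithin] with h hh
  rw [pow_add, mul_inv_cancel_right₀ (pow_ne_zero 2 hh)]

end Asymptotics.IsBigO

theorem exists_pos_bound_of_isBigO_nhdsNE {u v : ℝ → ℝ} (huv : u =O[𝓝[≠] 0] v) :
    ∃ C > 0, ∃ δ > 0, ∀ h : ℝ, h ≠ 0 → |h| ≤ δ → |u h| ≤ C * |v h| := by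
  obtain ⟨C, hC, hCuv⟩ := huv.exists_pos
  obtain ⟨ε, hε, hball⟩ :=
    Metric.eventually_nhds_iff.1 (eventually_nhdsWithin_iff.1 (isBigOWith_iff.1 hCuv))
  refine ⟨C, hC, ε / 2, half_pos hε, fun h hh hδ => ?_⟩
  simpa only [Real.norm_eq_abs] using hball (by rw [Real.dist_eq, sub_zero]; linarith) hh

section CompactScheme

variable (α a b : ℝ)

noncomputable def compactSchemeCoeff (j : ℕ) : ℝ :=
  2 * α / (2 * j)! - 2 * (4 ^ j * b + a) / (2 * j + 2)!

theorem compactScheme_evenTaylorSum (f : ℝ → ℝ) (x : ℝ) (N : ℕ) {h : ℝ} (hh : h ≠ 0) :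
    α * evenTaylorSum (iteratedDeriv 2 f) x N h
      - b * (evenTaylorSum f x (N + 1) (2 * h) - 2 * f x) / (4 * h ^ 2)
      - a * (evenTaylorSum f x (N + 1) h - 2 * f x) / h ^ 2
      = ∑ j ∈ range N,
          compactSchemeCoeff α a b j * (iteratedDeriv (2 * j + 2) f x * h ^ (2 * j)) := by
  have hshift : ∀ t, evenTaylorSum f x (N + 1) t - 2 * f x = 2 * ∑ j ∈ range N,
      t ^ (2 * j + 2) * (((2 * j + 2)! : ℝ)⁻¹ * iteratedDeriv (2 * j + 2) f x) := by
    intro t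
    simp [evenTaylorSum, sum_range_succ', mul_add]
  have hinner : evenTaylorSum (iteratedDeriv 2 f) x N h =
      2 * ∑ j ∈ range N, h ^ (2 * j) * (((2 * j)! : ℝ)⁻¹ * iteratedDeriv (2 * j + 2) f x) := by
    simp [evenTaylorSum, iteratedDeriv_iteratedDeriv]
  rw [hshift, hshift, hinner]
  simp only [mul_sum, sum_div, ← sum_sub_distrib]
  refine sum_congr rfl fun j _ => ?_
  have h2h : (2 * h) ^ (2 * j + 2) = 4 * 4 ^ j * h ^ 2 * h ^ (2 * j) := by
    rw [mul_pow, pow_add, pow_mul]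
    norm_num
    ring
  rw [compactSchemeCoeff, h2h, pow_add h]
  field_simp
  ring

theorem sum_compactSchemeCoeff_mul {N : ℕ} (hN : 1 ≤ N) (hc₀ : 1 + 2 * α = a + b)
    (hc : ∀ l, 1 ≤ l → l < N → compactSchemeCoeff α a b l = 0) (d : ℕ → ℝ) :
    ∑ j ∈ range N, compactSchemeCoeff α a b j * d j = -d 0 := by
  obtain ⟨N, rfl⟩ := Nat.exists_eq_add_of_le' hN
  have hcoeff₀ : compactSchemeCoeff α a b 0 = -1 := by
    norm_num [compactSchemeCoeff]
    linarith
  rw [sum_range_succ', hcoeff₀,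
    sum_eq_zero fun i hi => by rw [hc (i + 1) (by omega) (by simpa using hi), zero_mul]]
  ring

end CompactScheme

/-- If the coefficients `α, a, b` satisfy `1 + 2α = a + b` and
`2α/(2l)! = 2(4ˡ b + a)/(2l+2)!` for `l = 1, …, m/2 − 1` (with `m ≥ 2`
even), then the compact second-derivative scheme has order `m`: for
`f ∈ C^{m+2}` the truncation error `E(h)` satisfies `|E(h)| ≤ C |h|^m`
for all small `h ≠ 0`. -/
theorem compact_second_derivative_order_m
    (m : ℕ) (hm : 2 ≤ m) (hmeven : Even m)
    (f : ℝ → ℝ) (hf : ContDiff ℝ (m + 2 : ℕ) f) (x : ℝ)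
    (α a b : ℝ) (hcond0 : 1 + 2 * α = a + b)
    (hcond : ∀ l : ℕ, 1 ≤ l → l ≤ m / 2 - 1 →
      2 * α / (Nat.factorial (2 * l) : ℝ) =
        2 * ((4 : ℝ) ^ l * b + a) / (Nat.factorial (2 * l + 2) : ℝ))
    (E : ℝ → ℝ)
    (hE : ∀ h : ℝ, h ≠ 0 → E h =
      α * (iteratedDeriv 2 f (x - h) + iteratedDeriv 2 f (x + h))
        + iteratedDeriv 2 f x
        - b * (f (x + 2 * h) - 2 * f x + f (x - 2 * h)) / (4 * h ^ 2)
        - a * (f (x + h) - 2 * f x + f (x - h)) / h ^ 2) :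
    ∃ C > 0, ∃ h₀ > 0, ∀ h : ℝ, h ≠ 0 → |h| ≤ h₀ → |E h| ≤ C * |h| ^ m := by
  obtain ⟨N, rfl⟩ := hmeven.two_dvd
  have hf₂ : ContDiff ℝ (2 * N : ℕ) (iteratedDeriv 2 f) := by
    rw [iteratedDeriv_eq_iterate]
    exact hf.iterate_deriv' _ 2
  set R₁ := fun h => iteratedDeriv 2 f (x + h) + iteratedDeriv 2 f (x - h)
    - evenTaylorSum (iteratedDeriv 2 f) x N h
  set R₂ := fun h => f (x + h) + f (x - h) - evenTaylorSum f x (N + 1) h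
  have hR₁ : R₁ =O[𝓝 0] fun h => h ^ (2 * N) := evenTaylorSum_isBigO hf₂ x
  have hR₂ : R₂ =O[𝓝 0] fun h => h ^ (2 * N + 2) := evenTaylorSum_isBigO hf x
  have hsplit : ∀ h ≠ 0,
      E h = α * R₁ h - b / 4 * (R₂ (2 * h) / h ^ 2) - a * (R₂ h / h ^ 2) := by
    intro h hh
    have hexact := compactScheme_evenTaylorSum α a b f x N hh
    rw [sum_compactSchemeCoeff_mul α a b (by omega : 1 ≤ N) hcond0
      (fun l hl hlN => sub_eq_zero.2 (hcond l hl (by omega)))] at hexact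
    rw [hE h hh]
    linear_combination hexact
  have hEO : E =O[𝓝[≠] 0] fun h => h ^ (2 * N) :=
    (((hR₁.mono nhdsWithin_le_nhds).const_mul_left α).sub
      ((hR₂.comp_const_mul 2).div_sq.const_mul_left (b / 4)) |>.sub
      (hR₂.div_sq.const_mul_left a)).congr'
      (eventually_mem_nhdsWithin.mono fun h hh => (hsplit h hh).symm) .rfl
  obtain ⟨C, hC, δ, hδ, hbound⟩ := exists_pos_bound_of_isBigO_nhdsNE hEO
  exact ⟨C, hC, δ, hδ, fun h hh hhδ => by simpa only [abs_pow] using hbound h hh hhδ⟩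
end

section
/- Let m ≥ 2 be an even integer, let f : ℝ → ℝ be (m+3) times continuously differentiable, and let x ∈ ℝ. Suppose the real coefficients α, a, b satisfy 1 + 2α = a + b and, for every integer l with 1 ≤ l ≤ m/2 − 1, 2α/(2l)! = [2a(2^{2(l+1)} − 1) + (3/4)b(3^{2(l+1)} − 1)]/(2l+3)!. Define for h ≠ 0 the truncation error E(h) = α(f'''(x−h) + f'''(x+h)) + f'''(x) − a·(f(x+2h) − f(x−2h) − 2(f(x+h) − f(x−h)))/(2h³) − b·(f(x+3h) − f(x−3h) − 3(f(x+h) − f(x−h)))/(8h³). Then E(h) = O(h^m) as h → 0; i.e. the compact third-derivative scheme has order m. -/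
/-!
Expanding every value of `f` and of `f⁽ᵈ⁾` by Taylor's theorem at `x`, the combination
`hᵈ Σ βᵢ f⁽ᵈ⁾(x + sᵢ h) - Σ γⱼ f(x + tⱼ h)` equals
`Σ_{k < n + d} f⁽ᵏ⁾(x) hᵏ / k! · (Σ βᵢ k(k-1)⋯(k-d+1) sᵢ^(k-d) - Σ γⱼ tⱼᵏ) + O(h^(n+d))`,
so the scheme has order `n` as soon as it is exact on the monomials of degree `< n + d`.
For the compact third-derivative scheme these moment conditions hold trivially for even `k`
by symmetry, while for odd `k = 2l + 3` they are `1 + 2α = a + b` when `l = 0` and the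
stated conditions when `l ≥ 1`.
-/

open Asymptotics Filter Finset Topology
open scoped Nat

theorem taylor_isBigO_pow {f : ℝ → ℝ} {N : ℕ} (hf : ContDiff ℝ N f) (x : ℝ) :
    (fun h ↦ f (x + h) - ∑ k ∈ range N, iteratedDeriv k f x * h ^ k / k !) =O[𝓝 0]
      fun h ↦ h ^ N := by
  have hx : Tendsto (fun h : ℝ ↦ x + h) (𝓝 0) (𝓝 x) :=
    (continuous_const.add continuous_id).tendsto' 0 x (add_zero x)
  have hT : (fun h ↦ f (x + h) - taylorWithinEval f N Set.univ x (x + h)) =O[𝓝 0]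
      fun h ↦ h ^ N := by
    simpa [Function.comp_def] using (taylor_isLittleO_univ hf).isBigO.comp_tendsto hx
  refine (hT.add ((isBigO_refl _ _).const_mul_left (iteratedDeriv N f x / N !))).congr_left
    fun h ↦ ?_
  simp only [taylor_within_apply, sum_range_succ, iteratedDerivWithin_univ,
    add_sub_cancel_left, smul_eq_mul]
  have hterm (k : ℕ) : ((k ! : ℝ))⁻¹ * h ^ k * iteratedDeriv k f x =
      iteratedDeriv k f x * h ^ k / k ! := by ring
  simp only [hterm]
  ring

theorem taylor_isBigO_pow_comp_mul {f : ℝ → ℝ} {N : ℕ} (hf : ContDiff ℝ N f) (x c : ℝ) :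
    (fun h ↦ f (x + c * h) - ∑ k ∈ range N, iteratedDeriv k f x * (c * h) ^ k / k !) =O[𝓝 0]
      fun h ↦ h ^ N := by
  have hc : Tendsto (fun h : ℝ ↦ c * h) (𝓝 0) (𝓝 0) :=
    (continuous_const.mul continuous_id).tendsto' 0 0 (mul_zero c)
  refine ((taylor_isBigO_pow hf x).comp_tendsto hc).trans ?_
  simpa only [Function.comp_def, mul_pow] using
    (isBigO_refl (fun h : ℝ ↦ h ^ N) _).const_mul_left (c ^ N)

lemma pow_mul_sum_range_eq_sum_descFactorial (D : ℕ → ℝ) (d n : ℕ) (s h : ℝ) :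
    h ^ d * ∑ j ∈ range n, D (d + j) * (s * h) ^ j / j ! =
      ∑ k ∈ range (n + d), D k * h ^ k / k ! * (k.descFactorial d * s ^ (k - d)) := by
  rw [add_comm n d, sum_range_add, mul_sum,
    sum_eq_zero (s := range d) fun k hk ↦ by
      simp only [Nat.descFactorial_eq_zero_iff_lt.2 (mem_range.1 hk), Nat.cast_zero, zero_mul,
        mul_zero],
    zero_add]
  refine sum_congr rfl fun j _ ↦ ?_
  have hfac : ((d + j) ! : ℝ) = j ! * (d + j).descFactorial d := by
    have := Nat.factorial_mul_descFactorial (Nat.le_add_right d j)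
    rw [Nat.add_sub_cancel_left] at this
    exact_mod_cast this.symm
  rw [hfac, Nat.add_sub_cancel_left]
  field_simp
  ring

theorem finiteDifference_isBigO_of_moments {ι κ : Type*} [Fintype ι] [Fintype κ] {d n : ℕ}
    {f : ℝ → ℝ} (hf : ContDiff ℝ (n + d : ℕ) f) (x : ℝ) (β s : ι → ℝ) (γ t : κ → ℝ)
    (hmoment : ∀ k < n + d,
      ∑ i, β i * (k.descFactorial d * s i ^ (k - d)) = ∑ i, γ i * t i ^ k) :
    (fun h ↦ h ^ d * ∑ i, β i * iteratedDeriv d f (x + s i * h) - ∑ i, γ i * f (x + t i * h))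
      =O[𝓝 0] fun h ↦ h ^ (n + d) := by
  set D : ℕ → ℝ := fun k ↦ iteratedDeriv k f x
  have hderiv : ContDiff ℝ n (iteratedDeriv d f) := by
    rw [iteratedDeriv_eq_iterate]; exact hf.iterate_deriv' n d
  have hcoeff (j : ℕ) : iteratedDeriv j (iteratedDeriv d f) x = D (d + j) := by
    simp only [D, iteratedDeriv_eq_iterate, ← Function.iterate_add_apply, add_comm]
  have hpoly (h : ℝ) : h ^ d * ∑ i, β i * ∑ j ∈ range n, D (d + j) * (s i * h) ^ j / j ! =
      ∑ i, γ i * ∑ k ∈ range (n + d), D k * (t i * h) ^ k / k ! := by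
    calc h ^ d * ∑ i, β i * ∑ j ∈ range n, D (d + j) * (s i * h) ^ j / j !
        = ∑ i, β i *
            ∑ k ∈ range (n + d), D k * h ^ k / k ! * (k.descFactorial d * s i ^ (k - d)) := by
          rw [mul_sum]
          exact sum_congr rfl fun i _ ↦ by
            rw [mul_left_comm, pow_mul_sum_range_eq_sum_descFactorial]
      _ = ∑ k ∈ range (n + d),
            D k * h ^ k / k ! * ∑ i, β i * (k.descFactorial d * s i ^ (k - d)) := by
          simp only [mul_sum]
          rw [sum_comm]
          exact sum_congr rfl fun k _ ↦ sum_congr rfl fun i _ ↦ by ring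
      _ = ∑ k ∈ range (n + d), D k * h ^ k / k ! * ∑ i, γ i * t i ^ k :=
          sum_congr rfl fun k hk ↦ by rw [hmoment k (mem_range.1 hk)]
      _ = ∑ i, γ i * ∑ k ∈ range (n + d), D k * (t i * h) ^ k / k ! := by
          simp only [mul_sum]
          rw [sum_comm]
          exact sum_congr rfl fun i _ ↦ sum_congr rfl fun k _ ↦ by ring
  have hG : (fun h ↦ h ^ d * ∑ i, β i * (iteratedDeriv d f (x + s i * h) -
      ∑ j ∈ range n, iteratedDeriv j (iteratedDeriv d f) x * (s i * h) ^ j / j !))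
      =O[𝓝 0] fun h ↦ h ^ (n + d) := by
    refine ((isBigO_refl (fun h : ℝ ↦ h ^ d) _).mul (IsBigO.fun_sum fun i _ ↦
      (taylor_isBigO_pow_comp_mul hderiv x (s i)).const_mul_left (β i))).congr_right fun h ↦ ?_
    ring
  have hF : (fun h ↦ ∑ i, γ i * (f (x + t i * h) -
      ∑ k ∈ range (n + d), D k * (t i * h) ^ k / k !)) =O[𝓝 0] fun h ↦ h ^ (n + d) :=
    IsBigO.fun_sum fun i _ ↦ (taylor_isBigO_pow_comp_mul hf x (t i)).const_mul_left (γ i)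
  refine (hG.sub hF).congr_left fun h ↦ ?_
  simp only [hcoeff, mul_sub, sum_sub_distrib]
  linear_combination -hpoly h

-- With `0 ^ 0 = 1`, the node `0` carrying `f'''(x)` enters only the moment `k = 3`.
theorem compactThirdDeriv_moments {m : ℕ} (hmeven : Even m) {α a b : ℝ}
    (hcond0 : 1 + 2 * α = a + b)
    (hcond : ∀ l : ℕ, 1 ≤ l → l ≤ m / 2 - 1 →
      2 * α / (Nat.factorial (2 * l) : ℝ) =
        (2 * a * ((2 : ℝ) ^ (2 * (l + 1)) - 1)
            + (3 / 4) * b * ((3 : ℝ) ^ (2 * (l + 1)) - 1)) /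
          (Nat.factorial (2 * l + 3) : ℝ)) :
    ∀ k < m + 3, ∑ i, ![α, α, 1] i * (k.descFactorial 3 * ![-1, 1, 0] i ^ (k - 3)) =
      ∑ i, ![a / 2, -(a / 2), b / 8, -(b / 8), -(a + 3 * b / 8), a + 3 * b / 8] i *
        ![2, -2, 3, -3, 1, -1] i ^ k := by
  intro k hk
  simp only [Fin.sum_univ_succ, Fin.sum_univ_zero, Fin.isValue, Matrix.cons_val_zero,
    Matrix.cons_val_succ, one_pow]
  rcases lt_or_ge k 3 with hk3 | hk3
  · interval_cases k <;> norm_num; ring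
  obtain ⟨j, rfl⟩ : ∃ j, k = j + 3 := ⟨k - 3, by omega⟩
  rw [Nat.add_sub_cancel]
  obtain ⟨l, rfl | rfl⟩ := Nat.even_or_odd' j
  · have hodd : Odd (2 * l + 3) := ⟨l + 1, by ring⟩
    simp only [hodd.neg_pow, (even_two_mul l).neg_one_pow]
    rcases Nat.eq_zero_or_pos l with rfl | hl
    · norm_num [Nat.descFactorial]
      linear_combination 6 * hcond0
    have hdesc : ((2 * l + 3).descFactorial 3 : ℝ) * (2 * l) ! = (2 * l + 3) ! := by
      have := Nat.factorial_mul_descFactorial (show 3 ≤ 2 * l + 3 by omega)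
      rw [Nat.add_sub_cancel] at this
      exact_mod_cast (mul_comm _ _).trans this
    have hcondl := hcond l hl (by obtain ⟨r, rfl⟩ := hmeven; omega)
    have hdesc0 : ((2 * l + 3).descFactorial 3 : ℝ) ≠ 0 :=
      Nat.cast_ne_zero.2 (Nat.descFactorial_eq_zero_iff_lt.not.2 (by omega))
    rw [← hdesc] at hcondl
    field_simp at hcondl
    rw [zero_pow (by omega)]
    linear_combination hcondl / 4
  · have heven : Even (2 * l + 1 + 3) := ⟨l + 2, by ring⟩
    simp only [heven.neg_pow, (odd_two_mul_add_one l).neg_one_pow,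
      zero_pow (by omega : 2 * l + 1 ≠ 0)]
    ring

theorem compact_third_derivative_order_m_general
    (m : ℕ) (hmeven : Even m)
    (f : ℝ → ℝ) (hf : ContDiff ℝ (m + 3 : ℕ) f) (x : ℝ)
    (α a b : ℝ) (hcond0 : 1 + 2 * α = a + b)
    (hcond : ∀ l : ℕ, 1 ≤ l → l ≤ m / 2 - 1 →
      2 * α / (Nat.factorial (2 * l) : ℝ) =
        (2 * a * ((2 : ℝ) ^ (2 * (l + 1)) - 1)
            + (3 / 4) * b * ((3 : ℝ) ^ (2 * (l + 1)) - 1)) /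
          (Nat.factorial (2 * l + 3) : ℝ))
    (E : ℝ → ℝ)
    (hE : ∀ h : ℝ, h ≠ 0 → E h =
      α * (iteratedDeriv 3 f (x - h) + iteratedDeriv 3 f (x + h))
        + iteratedDeriv 3 f x
        - a * (f (x + 2 * h) - f (x - 2 * h)
            - 2 * (f (x + h) - f (x - h))) / (2 * h ^ 3)
        - b * (f (x + 3 * h) - f (x - 3 * h)
            - 3 * (f (x + h) - f (x - h))) / (8 * h ^ 3)) :
    ∃ C > 0, ∃ h₀ > 0, ∀ h : ℝ, h ≠ 0 → |h| ≤ h₀ → |E h| ≤ C * |h| ^ m := by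
  set β : Fin 3 → ℝ := ![α, α, 1]
  set s : Fin 3 → ℝ := ![-1, 1, 0]
  set γ : Fin 6 → ℝ := ![a / 2, -(a / 2), b / 8, -(b / 8), -(a + 3 * b / 8), a + 3 * b / 8]
  set t : Fin 6 → ℝ := ![2, -2, 3, -3, 1, -1]
  have hscheme (h : ℝ) (hne : h ≠ 0) : h ^ 3 * ∑ i, β i * iteratedDeriv 3 f (x + s i * h)
      - ∑ i, γ i * f (x + t i * h) = h ^ 3 * E h := by
    simp only [hE h hne, β, s, γ, t, Fin.sum_univ_succ, Fin.sum_univ_zero, Fin.isValue,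
      Matrix.cons_val_zero, Matrix.cons_val_succ, neg_mul, one_mul, zero_mul, add_zero,
      ← sub_eq_add_neg]
    field_simp
    ring
  obtain ⟨C, hC, hCw⟩ := (finiteDifference_isBigO_of_moments hf x β s γ t
    (compactThirdDeriv_moments hmeven hcond0 hcond)).exists_pos
  obtain ⟨h₀, hh₀, hball⟩ := Metric.eventually_nhds_iff.1 hCw.bound
  refine ⟨C, hC, h₀ / 2, by positivity, fun h hne hle ↦ ?_⟩
  have hbound := hball (show dist h 0 < h₀ by rw [Real.dist_0_eq_abs]; linarith)
  rw [hscheme h hne, norm_mul, norm_pow, norm_pow, Real.norm_eq_abs, Real.norm_eq_abs] at hbound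
  exact le_of_mul_le_mul_left (hbound.trans_eq (by ring)) (pow_pos (abs_pos.2 hne) 3)

/-- If the coefficients `α, a, b` satisfy `1 + 2α = a + b` and
`2α/(2l)! = [2a(2^{2(l+1)} − 1) + (3/4)b(3^{2(l+1)} − 1)]/(2l+3)!` for
`l = 1, …, m/2 − 1` (with `m ≥ 2` even), then the compact third-derivative
scheme has order `m`: for `f ∈ C^{m+3}` the truncation error `E(h)`
satisfies `|E(h)| ≤ C |h|^m` for all small `h ≠ 0`. -/
theorem compact_third_derivative_order_m
    (m : ℕ) (hm : 2 ≤ m) (hmeven : Even m)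
    (f : ℝ → ℝ) (hf : ContDiff ℝ (m + 3 : ℕ) f) (x : ℝ)
    (α a b : ℝ) (hcond0 : 1 + 2 * α = a + b)
    (hcond : ∀ l : ℕ, 1 ≤ l → l ≤ m / 2 - 1 →
      2 * α / (Nat.factorial (2 * l) : ℝ) =
        (2 * a * ((2 : ℝ) ^ (2 * (l + 1)) - 1)
            + (3 / 4) * b * ((3 : ℝ) ^ (2 * (l + 1)) - 1)) /
          (Nat.factorial (2 * l + 3) : ℝ))
    (E : ℝ → ℝ)
    (hE : ∀ h : ℝ, h ≠ 0 → E h =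
      α * (iteratedDeriv 3 f (x - h) + iteratedDeriv 3 f (x + h))
        + iteratedDeriv 3 f x
        - a * (f (x + 2 * h) - f (x - 2 * h)
            - 2 * (f (x + h) - f (x - h))) / (2 * h ^ 3)
        - b * (f (x + 3 * h) - f (x - 3 * h)
            - 3 * (f (x + h) - f (x - h))) / (8 * h ^ 3)) :
    ∃ C > 0, ∃ h₀ > 0, ∀ h : ℝ, h ≠ 0 → |h| ≤ h₀ → |E h| ≤ C * |h| ^ m :=
  compact_third_derivative_order_m_general m hmeven f hf x α a b hcond0 hcond E hE
end
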